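/- arXiv:2602.19272 — 5 statements merged into one kernel-verified Lean document; each statement's English description precedes it below -/
import Mathlib

section
/- Let $A \in \mathbb{R}^{n \times n}$ and $B \in \mathbb{R}^{n \times m}$, and fix $T > 0$. The linear control system $\dot y = Ay + Bu$ is controllable in time $T$ (i.e., for all $y_0, y_T \in \mathbb{R}^n$ there exists $u \in L^2((0,T);\mathbb{R}^m)$ with $e^{TA}y_0 + \int_0^T e^{(T-t)A}Bu(t)\,dt = y_T$) if and only if the block matrix $[B, AB, A^2B, \dots, A^{n-1}B]$ has rank $n$. -/
open MeasureTheory Matrix NormedSpace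

attribute [local instance] Matrix.linftyOpNormedRing Matrix.linftyOpNormedAlgebra

namespace KalmanAux

lemma vecMul_smul_right {n m : ℕ} (v : Fin n → ℝ) (c : ℝ) (N : Matrix (Fin n) (Fin m) ℝ) :
    Matrix.vecMul v (c • N) = c • Matrix.vecMul v N := by
  ext j
  simp only [Matrix.vecMul, dotProduct, Matrix.smul_apply, Pi.smul_apply,
    smul_eq_mul, Finset.mul_sum]
  exact Finset.sum_congr rfl fun i _ => by ring

lemma kalman_aux_pow {n m : ℕ} (A : Matrix (Fin n) (Fin n) ℝ)
    (B : Matrix (Fin n) (Fin m) ℝ) (v : Fin n → ℝ)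
    (h : ∀ k < n, Matrix.vecMul v (A ^ k * B) = 0) :
    ∀ k, Matrix.vecMul v (A ^ k * B) = 0 := by
  have hpow : A ^ n = -∑ i ∈ Finset.range n, A.charpoly.coeff i • A ^ i := by
    have h0 := Matrix.aeval_self_charpoly A
    rw [Polynomial.aeval_eq_sum_range, Matrix.charpoly_natDegree_eq_dim,
      Finset.sum_range_succ] at h0
    have hc : A.charpoly.coeff (Fintype.card (Fin n)) = 1 := by
      have := (Matrix.charpoly_monic A).coeff_natDegree
      rwa [Matrix.charpoly_natDegree_eq_dim] at this
    rw [hc, one_smul, Fintype.card_fin] at h0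
    linear_combination (norm := abel) h0
  intro k
  induction k using Nat.strong_induction_on with
  | _ k ih =>
    rcases lt_or_ge k n with hk | hk
    · exact h k hk
    · have hkn : k = (k - n) + n := (Nat.sub_add_cancel hk).symm
      rw [hkn, pow_add, hpow, mul_neg, Finset.mul_sum, Matrix.neg_mul, Matrix.vecMul_neg,
        Matrix.sum_mul]
      have hz : ∀ i ∈ Finset.range n,
          Matrix.vecMul v (A ^ (k - n) * A.charpoly.coeff i • A ^ i * B) = 0 := by
        intro i hi
        have hi' := Finset.mem_range.mp hi
        rw [mul_smul_comm, Matrix.smul_mul, vecMul_smul_right, ← pow_add,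
          ih (k - n + i) (by omega)]
        simp
      have hsum : Matrix.vecMul v (∑ a ∈ Finset.range n,
          A ^ (k - n) * A.charpoly.coeff a • A ^ a * B)
          = ∑ a ∈ Finset.range n,
            Matrix.vecMul v (A ^ (k - n) * A.charpoly.coeff a • A ^ a * B) := by
        ext j
        simp only [Matrix.vecMul, dotProduct, Finset.sum_apply,
          Matrix.sum_apply, Finset.mul_sum]
        exact Finset.sum_comm
      rw [hsum, Finset.sum_congr rfl hz]
      simp

noncomputable def kalmanL {n m : ℕ} (B : Matrix (Fin n) (Fin m) ℝ) (v : Fin n → ℝ) :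
    Matrix (Fin n) (Fin n) ℝ →L[ℝ] (Fin m → ℝ) :=
  LinearMap.toContinuousLinearMap
  { toFun := fun M => Matrix.vecMul v (M * B)
    map_add' := fun M N => by
      show Matrix.vecMul v ((M + N) * B) = _
      rw [Matrix.add_mul, Matrix.vecMul_add]
    map_smul' := fun c M => by
      show Matrix.vecMul v ((c • M) * B) = _
      rw [Matrix.smul_mul, vecMul_smul_right]; rfl }

lemma kalman_aux_exp {n m : ℕ} (A : Matrix (Fin n) (Fin n) ℝ)
    (B : Matrix (Fin n) (Fin m) ℝ) (v : Fin n → ℝ)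
    (h : ∀ k, Matrix.vecMul v (A ^ k * B) = 0) (s : ℝ) :
    Matrix.vecMul v (NormedSpace.exp (s • A) * B) = 0 := by
  have h1 : Matrix.vecMul v (NormedSpace.exp (s • A) * B) = kalmanL B v (exp (s • A)) := rfl
  rw [h1, exp_eq_tsum ℝ, (kalmanL B v).map_tsum (expSeries_summable' (𝕂 := ℝ) (s • A))]
  have hz : ∀ k : ℕ, kalmanL B v (((Nat.factorial k : ℝ))⁻¹ • (s • A) ^ k) = 0 := by
    intro k
    rw [_root_.map_smul, smul_pow]
    have h2 : kalmanL B v (s ^ k • A ^ k) = s ^ k • kalmanL B v (A ^ k) := _root_.map_smul _ _ _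
    rw [h2]
    have h3 : kalmanL B v (A ^ k) = 0 := h k
    rw [h3, smul_zero, smul_zero]
  simp only [hz, tsum_zero]

lemma null_of_rank_lt {n : ℕ} {ι : Type*} [Fintype ι] (K : Matrix (Fin n) ι ℝ)
    (h : K.rank ≠ n) : ∃ v : Fin n → ℝ, v ≠ 0 ∧ Matrix.vecMul v K = 0 := by
  have ht : Kᵀ.rank = K.rank := Matrix.rank_transpose K
  have hle : K.rank ≤ n := (Matrix.rank_le_card_height K).trans (by simp)
  have hlt : K.rank < n := lt_of_le_of_ne hle h
  have hker : LinearMap.ker Kᵀ.mulVecLin ≠ ⊥ := by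
    intro hbot
    have hfr := LinearMap.finrank_range_add_finrank_ker Kᵀ.mulVecLin
    have hdom : Module.finrank ℝ (Fin n → ℝ) = n := by simp
    have hker0 : Module.finrank ℝ (LinearMap.ker Kᵀ.mulVecLin) = 0 :=
      Submodule.finrank_eq_zero.mpr hbot
    have hrank : Module.finrank ℝ (LinearMap.range Kᵀ.mulVecLin) = K.rank := by
      rw [← Matrix.rank, ht]
    omega
  obtain ⟨v, hv, hv0⟩ := Submodule.exists_mem_ne_zero_of_ne_bot hker
  exact ⟨v, hv0, by rw [← Matrix.mulVec_transpose]; exact hv⟩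

lemma null_eq_zero_of_rank {n : ℕ} {ι : Type*} [Fintype ι] (K : Matrix (Fin n) ι ℝ)
    (h : K.rank = n) (v : Fin n → ℝ) (hv : Matrix.vecMul v K = 0) : v = 0 := by
  have ht : Kᵀ.rank = K.rank := Matrix.rank_transpose K
  have hfr := LinearMap.finrank_range_add_finrank_ker Kᵀ.mulVecLin
  have hdom : Module.finrank ℝ (Fin n → ℝ) = n := by simp
  rw [hdom] at hfr
  have hrank : Module.finrank ℝ (LinearMap.range Kᵀ.mulVecLin) = n := by
    rw [← Matrix.rank, ht, h]
  have hker0 : Module.finrank ℝ (LinearMap.ker Kᵀ.mulVecLin) = 0 := by omega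
  have hbot : LinearMap.ker Kᵀ.mulVecLin = ⊥ := Submodule.finrank_eq_zero.mp hker0
  have hmem : v ∈ LinearMap.ker Kᵀ.mulVecLin := by
    simp [LinearMap.mem_ker, Matrix.mulVecLin_apply, Matrix.mulVec_transpose, hv]
  rw [hbot] at hmem
  simpa using hmem

noncomputable def dotCLM {n : ℕ} (v : Fin n → ℝ) : (Fin n → ℝ) →L[ℝ] ℝ :=
  LinearMap.toContinuousLinearMap
  { toFun := fun w => dotProduct v w
    map_add' := fun w z => dotProduct_add v w z
    map_smul' := fun c w => by simp [dotProduct_smul] }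

lemma dot_integral_zero {n m : ℕ} (A : Matrix (Fin n) (Fin n) ℝ) (B : Matrix (Fin n) (Fin m) ℝ)
    (T : ℝ) (v : Fin n → ℝ) (u : ℝ → Fin m → ℝ)
    (hexp : ∀ s : ℝ, Matrix.vecMul v (exp (s • A) * B) = 0) :
    dotProduct v (∫ t in (0:ℝ)..T, (exp ((T - t) • A)).mulVec (B.mulVec (u t))) = 0 := by
  set f : ℝ → Fin n → ℝ := fun t => (exp ((T - t) • A)).mulVec (B.mulVec (u t)) with hf
  have hf0 : ∀ t, dotProduct v (f t) = 0 := by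
    intro t
    rw [hf]
    simp only
    rw [dotProduct_mulVec, dotProduct_mulVec, Matrix.vecMul_vecMul,
      hexp (T - t), zero_dotProduct]
  by_cases hint : IntervalIntegrable f volume 0 T
  · have h2 : (∫ t in (0:ℝ)..T, dotCLM v (f t)) = dotCLM v (∫ t in (0:ℝ)..T, f t) :=
      (dotCLM v).intervalIntegral_comp_comm hint
    have h3 : (∫ t in (0:ℝ)..T, dotCLM v (f t)) = 0 := by
      simp only [show ∀ t, dotCLM v (f t) = 0 from hf0]
      simp
    have h4 : dotCLM v (∫ t in (0:ℝ)..T, f t) = dotProduct v (∫ t in (0:ℝ)..T, f t) := rfl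
    rw [← h4, ← h2, h3]
  · rw [intervalIntegral.integral_undef hint, dotProduct_zero]

lemma cont_eq_zero_on_Ioo {T : ℝ} (hT : 0 < T) (g : ℝ → ℝ) (hg : Continuous g)
    (hnn : ∀ t, 0 ≤ g t) (hint : (∫ t in (0:ℝ)..T, g t) = 0) :
    ∀ t ∈ Set.Ioo 0 T, g t = 0 := by
  rw [intervalIntegral.integral_of_le hT.le] at hint
  have hInt : IntegrableOn g (Set.Ioc 0 T) volume := hg.integrableOn_Ioc
  have hae : g =ᵐ[volume.restrict (Set.Ioc 0 T)] 0 :=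
    (integral_eq_zero_iff_of_nonneg (fun t => hnn t) hInt).mp hint
  have hae' : ∀ᵐ t ∂(volume : Measure ℝ), t ∈ Set.Ioc 0 T → g t = 0 :=
    (ae_restrict_iff' measurableSet_Ioc).mp hae
  intro t ht
  by_contra hgt
  set U : Set ℝ := {x | g x ≠ 0} ∩ Set.Ioo 0 T with hU
  have hUopen : IsOpen U := ((isOpen_ne_fun hg continuous_const)).inter isOpen_Ioo
  have hUnull : volume U = 0 := by
    refine measure_mono_null (fun x hx => ?_) (ae_iff.mp hae')
    simp only [Set.mem_setOf_eq]
    intro hcon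
    exact hx.1 (hcon (Set.Ioo_subset_Ioc_self hx.2))
  have hUempty : U = ∅ := hUopen.eq_empty_of_measure_zero hUnull
  have : t ∈ U := ⟨hgt, ht⟩
  rw [hUempty] at this
  exact this

lemma vanish_on_Ioo_pow {n m : ℕ} (A : Matrix (Fin n) (Fin n) ℝ)
    (B : Matrix (Fin n) (Fin m) ℝ) (v : Fin n → ℝ) {T : ℝ} (hT : 0 < T)
    (hIoo : ∀ s ∈ Set.Ioo 0 T, Matrix.vecMul v (exp (s • A) * B) = 0) :
    ∀ k, Matrix.vecMul v (A ^ k * B) = 0 := by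
  set ψ : ℕ → ℝ → (Fin m → ℝ) := fun k s => kalmanL B v (A ^ k * exp (s • A)) with hψ
  have hψIoo : ∀ k, ∀ s ∈ Set.Ioo 0 T, ψ k s = 0 := by
    intro k
    induction k with
    | zero =>
      intro s hs
      simpa [hψ, kalmanL, Matrix.one_mul] using hIoo s hs
    | succ k ih =>
      intro s hs
      set L : Matrix (Fin n) (Fin n) ℝ →L[ℝ] (Fin m → ℝ) :=
        (kalmanL B v).comp ((ContinuousLinearMap.mul ℝ (Matrix (Fin n) (Fin n) ℝ)) (A ^ k))
        with hL
      have hLψ : ∀ t, ψ k t = L (exp (t • A)) := fun t => rfl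
      have hder : HasDerivAt (ψ k) (L (A * exp (s • A))) s := by
        have h1 : HasDerivAt (fun t : ℝ => exp (t • A)) (A * exp (s • A)) s :=
          hasDerivAt_exp_smul_const' A s
        have := (L.hasFDerivAt (x := exp (s • A))).comp_hasDerivAt s h1
        exact this
      have hev : ψ k =ᶠ[nhds s] (fun _ => (0 : Fin m → ℝ)) := by
        filter_upwards [isOpen_Ioo.mem_nhds hs] with t ht
        exact ih t ht
      have hzero : HasDerivAt (ψ k) 0 s :=
        (hasDerivAt_const s (0 : Fin m → ℝ)).congr_of_eventuallyEq hev
      have huniq : L (A * exp (s • A)) = 0 := hder.unique hzero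
      have : ψ (k + 1) s = L (A * exp (s • A)) := by
        show kalmanL B v (A ^ (k+1) * exp (s • A)) = kalmanL B v (A ^ k * (A * exp (s • A)))
        rw [← mul_assoc, pow_succ]
      rw [this, huniq]
  intro k
  have hcont : Continuous (ψ k) := by
    apply (kalmanL B v).continuous.comp
    exact (continuous_const.mul (exp_continuous.comp (continuous_id.smul continuous_const)))
  have hmem : (0 : ℝ) ∈ closure (Set.Ioo 0 T) := by
    rw [closure_Ioo hT.ne]
    exact Set.mem_Icc.mpr ⟨le_refl 0, hT.le⟩
  have hne : (nhdsWithin (0:ℝ) (Set.Ioo 0 T)).NeBot :=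
    mem_closure_iff_nhdsWithin_neBot.mp hmem
  have h1 : Filter.Tendsto (ψ k) (nhdsWithin 0 (Set.Ioo 0 T)) (nhds (ψ k 0)) :=
    (hcont.continuousWithinAt)
  have h2 : Filter.Tendsto (ψ k) (nhdsWithin 0 (Set.Ioo 0 T)) (nhds 0) := by
    apply Filter.Tendsto.congr' _ tendsto_const_nhds
    filter_upwards [self_mem_nhdsWithin] with t ht
    exact (hψIoo k t ht).symm
  have h0 : ψ k 0 = 0 := tendsto_nhds_unique h1 h2
  have heq0 : ψ k 0 = Matrix.vecMul v (A ^ k * B) := by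
    show kalmanL B v (A ^ k * exp ((0:ℝ) • A)) = _
    rw [zero_smul, exp_zero, mul_one]
    rfl
  rwa [heq0] at h0

noncomputable def mulVecCLM {n : ℕ} (η : Fin n → ℝ) :
    Matrix (Fin n) (Fin n) ℝ →L[ℝ] (Fin n → ℝ) :=
  LinearMap.toContinuousLinearMap
  { toFun := fun W => W.mulVec η
    map_add' := fun W Z => Matrix.add_mulVec W Z η
    map_smul' := fun c W => by
      show ((c • W).mulVec η) = _
      rw [Matrix.smul_mulVec]
      rfl }

end KalmanAux

open KalmanAux in
/-- **Kalman rank condition.** The linear control system `y' = A y + B u` is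
controllable in time `T > 0` (with `L²` controls) iff the Kalman matrix
`[B, AB, …, A^{n-1}B]` has rank `n`. -/
theorem kalman_rank_condition (n m : ℕ) (A : Matrix (Fin n) (Fin n) ℝ)
    (B : Matrix (Fin n) (Fin m) ℝ) (T : ℝ) (hT : 0 < T) :
    (∀ y0 yT : Fin n → ℝ, ∃ u : ℝ → (Fin m → ℝ),
      MemLp u 2 (volume.restrict (Set.Ioc 0 T)) ∧
      (NormedSpace.exp (T • A)).mulVec y0
        + (∫ t in (0:ℝ)..T, (NormedSpace.exp ((T - t) • A)).mulVec (B.mulVec (u t))) = yT)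
      ↔
    (Matrix.of fun (i : Fin n) (p : Fin n × Fin m) => (A ^ (p.1 : ℕ) * B) i p.2).rank = n := by
  set K : Matrix (Fin n) (Fin n × Fin m) ℝ :=
    Matrix.of fun (i : Fin n) (p : Fin n × Fin m) => (A ^ (p.1 : ℕ) * B) i p.2 with hK
  constructor
  · -- controllability → rank
    intro hcon
    by_contra hrank
    obtain ⟨v, hv0, hvK⟩ := null_of_rank_lt K hrank
    have hfin : ∀ k < n, Matrix.vecMul v (A ^ k * B) = 0 := by
      intro k hk
      funext j
      have := congrFun hvK (⟨k, hk⟩, j)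
      simpa [hK, Matrix.vecMul, dotProduct] using this
    have hall := kalman_aux_pow A B v hfin
    have hexp := kalman_aux_exp A B v hall
    obtain ⟨u, _, heq⟩ := hcon 0 v
    have hdot := congrArg (fun w => dotProduct v w) heq
    simp only [Matrix.mulVec_zero, zero_add] at hdot
    rw [dot_integral_zero A B T v u hexp] at hdot
    exact hv0 (dotProduct_self_eq_zero.mp hdot.symm)
  · -- rank → controllability
    intro hrank y0 yT
    haveI : CompleteSpace (Matrix (Fin n) (Fin n) ℝ) := by infer_instance
    letI : ENormedAddMonoid (Matrix (Fin n) (Fin n) ℝ) :=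
      NormedAddCommGroup.toENormedAddCommMonoid.toENormedAddMonoid
    set E : ℝ → Matrix (Fin n) (Fin n) ℝ := fun t => exp ((T - t) • A) with hE
    set M : ℝ → Matrix (Fin n) (Fin m) ℝ := fun t => E t * B with hM
    set N : ℝ → Matrix (Fin n) (Fin n) ℝ := fun t => M t * (M t)ᵀ with hN
    have hEcont : Continuous E :=
      exp_continuous.comp ((continuous_const.sub continuous_id).smul continuous_const)
    have hMcont : Continuous M := hEcont.matrix_mul continuous_const
    have hNcont : Continuous N := hMcont.matrix_mul hMcont.matrix_transpose
    have hNint : IntervalIntegrable N volume 0 T := hNcont.intervalIntegrable 0 T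
    set G : Matrix (Fin n) (Fin n) ℝ := ∫ t in (0:ℝ)..T, N t with hG
    -- injectivity of G
    have hGinj : ∀ v : Fin n → ℝ, G.mulVec v = 0 → v = 0 := by
      intro v hGv
      set w : ℝ → (Fin m → ℝ) := fun t => Matrix.vecMul v (M t) with hw
      set g : ℝ → ℝ := fun t => dotProduct (w t) (w t) with hg
      have hQN : ∀ t, dotCLM v (mulVecCLM v (N t)) = g t := by
        intro t
        show dotProduct v ((M t * (M t)ᵀ).mulVec v) = _
        rw [← Matrix.mulVec_mulVec, dotProduct_mulVec, Matrix.mulVec_transpose]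
      have hQG : dotCLM v (mulVecCLM v G) = ∫ t in (0:ℝ)..T, g t := by
        have e1 : mulVecCLM v G = ∫ t in (0:ℝ)..T, mulVecCLM v (N t) :=
          ((mulVecCLM v).intervalIntegral_comp_comm hNint).symm
        have hNint' : IntervalIntegrable (fun t => mulVecCLM v (N t)) volume 0 T :=
          ((mulVecCLM v).continuous.comp hNcont).intervalIntegrable 0 T
        rw [e1, ← (dotCLM v).intervalIntegral_comp_comm hNint']
        exact intervalIntegral.integral_congr fun t _ => hQN t
      have hQG0 : dotCLM v (mulVecCLM v G) = 0 := by
        show dotProduct v (G.mulVec v) = 0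
        rw [hGv, dotProduct_zero]
      have hgnn : ∀ t, 0 ≤ g t :=
        fun t => Finset.sum_nonneg fun j _ => mul_self_nonneg _
      have hwcont : Continuous w := continuous_const.matrix_vecMul hMcont
      have hgcont : Continuous g := by
        simp only [hg, dotProduct]
        exact continuous_finset_sum _ fun j _ =>
          ((continuous_apply j).comp hwcont).mul ((continuous_apply j).comp hwcont)
      have hgzero := cont_eq_zero_on_Ioo hT g hgcont hgnn (by rw [← hQG, hQG0])
      have hwzero : ∀ t ∈ Set.Ioo 0 T, w t = 0 := by
        intro t ht
        exact dotProduct_self_eq_zero.mp (hgzero t ht)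
      have hIoo : ∀ s ∈ Set.Ioo 0 T, Matrix.vecMul v (exp (s • A) * B) = 0 := by
        intro s hs
        have ht : T - s ∈ Set.Ioo 0 T := by
          constructor <;> [linarith [hs.2]; linarith [hs.1]]
        have := hwzero (T - s) ht
        simpa [hw, hM, hE, show T - (T - s) = s by ring] using this
      have hall := vanish_on_Ioo_pow A B v hT hIoo
      apply null_eq_zero_of_rank K hrank v
      funext p
      have := congrFun (hall (p.1 : ℕ)) p.2
      simpa [hK, Matrix.vecMul, dotProduct] using this
    -- surjectivity
    have hinj : Function.Injective G.mulVecLin := by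
      rw [injective_iff_map_eq_zero]
      intro v hv
      exact hGinj v hv
    have hsurj : Function.Surjective G.mulVecLin :=
      LinearMap.surjective_of_injective hinj
    obtain ⟨η, hη⟩ := hsurj (yT - (exp (T • A)).mulVec y0)
    refine ⟨fun t => Matrix.vecMul η (M t), ?_, ?_⟩
    · -- MemLp
      have hucont : Continuous fun t => Matrix.vecMul η (M t) :=
        continuous_const.matrix_vecMul hMcont
      haveI : IsFiniteMeasure (volume.restrict (Set.Ioc 0 T)) := by
        constructor
        rw [Measure.restrict_apply_univ]
        rw [Real.volume_Ioc]
        exact ENNReal.ofReal_lt_top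
      obtain ⟨C, hC⟩ := (isCompact_Icc (a := (0:ℝ)) (b := T)).exists_bound_of_continuousOn
        hucont.continuousOn
      refine MemLp.of_bound hucont.aestronglyMeasurable C ?_
      refine (ae_restrict_iff' measurableSet_Ioc).mpr (Filter.Eventually.of_forall ?_)
      exact fun t ht => hC t (Set.Ioc_subset_Icc_self ht)
    · -- the dynamics
      have hptw : ∀ t, (exp ((T - t) • A)).mulVec (B.mulVec (Matrix.vecMul η (M t)))
          = mulVecCLM η (N t) := by
        intro t
        show (E t).mulVec (B.mulVec (Matrix.vecMul η (M t))) = (N t).mulVec η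
        rw [Matrix.mulVec_mulVec]
        show (M t).mulVec (Matrix.vecMul η (M t)) = (N t).mulVec η
        rw [← Matrix.mulVec_transpose, Matrix.mulVec_mulVec]
      have hNint' : IntervalIntegrable (fun t => mulVecCLM η (N t)) volume 0 T :=
        ((mulVecCLM η).continuous.comp hNcont).intervalIntegrable 0 T
      have e2 : (∫ t in (0:ℝ)..T, (exp ((T - t) • A)).mulVec
          (B.mulVec (Matrix.vecMul η (M t)))) = G.mulVec η := by
        rw [intervalIntegral.integral_congr (fun t _ => hptw t)]
        erw [(mulVecCLM η).intervalIntegral_comp_comm hNint]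
        rfl
      rw [e2]
      have : G.mulVec η = yT - (exp (T • A)).mulVec y0 := hη
      rw [this]
      abel
end

section
/- Let $n \ge 1$ and let $z_1, \dots, z_n \in \mathbb{C}$ be pairwise distinct. Let $V = (z_j^{k-1})_{1 \le j,k \le n}$ be the Vandermonde matrix. Then the operator norm (with respect to the Euclidean norm) of $V^{-1}$ satisfies $\|V^{-1}\| \le \sqrt{n}\, \max_{1 \le j \le n} \prod_{k \ne j} \frac{1 + |z_k|}{|z_j - z_k|}$. -/
open Matrix Finset Polynomial

namespace GautschiAux

/-- ℓ¹ norm of the coefficients of a complex polynomial. -/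
noncomputable def l1 (p : Polynomial ℂ) : ℝ :=
  ∑ i ∈ Finset.range (p.natDegree + 1), ‖p.coeff i‖

lemma l1_eq {p : Polynomial ℂ} {N : ℕ} (hN : p.natDegree < N) :
    l1 p = ∑ i ∈ Finset.range N, ‖p.coeff i‖ := by
  refine Finset.sum_subset (Finset.range_subset_range.2 hN) fun i _ hi => ?_
  rw [Finset.mem_range, not_lt] at hi
  rw [Polynomial.coeff_eq_zero_of_natDegree_lt (by omega)]
  simp

lemma l1_nonneg (p : Polynomial ℂ) : 0 ≤ l1 p :=
  Finset.sum_nonneg fun _ _ => norm_nonneg _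

lemma l1_one : l1 (1 : Polynomial ℂ) = 1 := by
  simp [l1]

lemma l1_mul_le (p q : Polynomial ℂ) : l1 (p * q) ≤ l1 p * l1 q := by
  set N := p.natDegree + q.natDegree + 1 with hN
  have hpq : (p * q).natDegree < N := lt_of_le_of_lt (Polynomial.natDegree_mul_le) (by omega)
  have hp : p.natDegree < N := by omega
  have hq : q.natDegree < N := by omega
  rw [l1_eq hpq, l1_eq hp, l1_eq hq]
  calc ∑ n ∈ Finset.range N, ‖(p * q).coeff n‖
      ≤ ∑ n ∈ Finset.range N, ∑ ij ∈ Finset.HasAntidiagonal.antidiagonal n,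
          ‖p.coeff ij.1‖ * ‖q.coeff ij.2‖ := by
        refine Finset.sum_le_sum fun n _ => ?_
        rw [Polynomial.coeff_mul]
        refine le_trans (norm_sum_le _ _) ?_
        refine le_of_eq (Finset.sum_congr rfl fun ij _ => ?_)
        exact norm_mul _ _
    _ = ∑ ij ∈ (Finset.range N).biUnion Finset.HasAntidiagonal.antidiagonal,
          ‖p.coeff ij.1‖ * ‖q.coeff ij.2‖ := by
        refine (Finset.sum_biUnion ?_).symm
        intro a _ b _ hab
        refine Finset.disjoint_left.2 fun ij hia hib => hab ?_
        rw [Finset.HasAntidiagonal.mem_antidiagonal] at hia hib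
        omega
    _ ≤ ∑ ij ∈ Finset.range N ×ˢ Finset.range N,
          ‖p.coeff ij.1‖ * ‖q.coeff ij.2‖ := by
        refine Finset.sum_le_sum_of_subset_of_nonneg ?_ fun _ _ _ => by positivity
        intro ij hij
        simp only [Finset.mem_biUnion, Finset.mem_range, Finset.HasAntidiagonal.mem_antidiagonal] at hij
        obtain ⟨n, hn, hsum⟩ := hij
        simp only [Finset.mem_product, Finset.mem_range]
        omega
    _ = (∑ i ∈ Finset.range N, ‖p.coeff i‖) *
          (∑ j ∈ Finset.range N, ‖q.coeff j‖) := by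
        rw [Finset.sum_mul_sum, Finset.sum_product]

lemma l1_prod_le {ι : Type*} (s : Finset ι) (f : ι → Polynomial ℂ) :
    l1 (∏ i ∈ s, f i) ≤ ∏ i ∈ s, l1 (f i) := by
  induction s using Finset.cons_induction with
  | empty => simp [l1_one]
  | cons a s ha ih =>
      rw [Finset.prod_cons, Finset.prod_cons]
      refine le_trans (l1_mul_le _ _) ?_
      exact mul_le_mul_of_nonneg_left ih (l1_nonneg _)

lemma l1_basisDivisor {x y : ℂ} (hxy : x ≠ y) :
    l1 (Lagrange.basisDivisor x y) = (1 + ‖y‖) / ‖x - y‖ := by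
  have hd : (Lagrange.basisDivisor x y).natDegree = 1 := Lagrange.natDegree_basisDivisor_of_ne hxy
  rw [l1, hd]
  have h0 : (Lagrange.basisDivisor x y).coeff 0 = (x - y)⁻¹ * (-y) := by
    simp [Lagrange.basisDivisor, Polynomial.coeff_sub]
  have h1 : (Lagrange.basisDivisor x y).coeff 1 = (x - y)⁻¹ := by
    simp [Lagrange.basisDivisor, Polynomial.coeff_sub]
  rw [Finset.sum_range_succ, Finset.sum_range_one, h0, h1]
  have hxy' : ‖x - y‖ ≠ 0 := by
    simpa [sub_eq_zero] using hxy
  rw [norm_mul, norm_inv, norm_neg]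
  field_simp
  ring

end GautschiAux

open GautschiAux

/-- **Gautschi's bound** for the inverse of a Vandermonde matrix: for pairwise distinct
nodes `z_1, …, z_n ∈ ℂ`, the Euclidean operator norm of `V⁻¹` is at most
`√n · max_j ∏_{k ≠ j} (1 + |z_k|)/|z_j - z_k|`. -/
theorem gautschi_vandermonde_inverse_bound (n : ℕ) (hn : 0 < n) (z : Fin n → ℂ)
    (hz : Function.Injective z)
    (V : Matrix (Fin n) (Fin n) ℂ) (hV : V = Matrix.of fun (j k : Fin n) => z j ^ (k : ℕ)) :
    ∀ x : Fin n → ℂ,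
      Real.sqrt (∑ i, ‖(V⁻¹).mulVec x i‖ ^ 2) ≤
        Real.sqrt n *
          (Finset.univ.sup' (Finset.univ_nonempty_iff.mpr ⟨⟨0, hn⟩⟩)
            fun j => ∏ k ∈ Finset.univ.erase j,
              (1 + ‖z k‖) / ‖z j - z k‖) *
          Real.sqrt (∑ i, ‖x i‖ ^ 2) := by
  intro x
  have hinj : Set.InjOn z (Finset.univ : Finset (Fin n)) := fun a _ b _ h => hz h
  -- the Lagrange basis polynomials
  set L : Fin n → Polynomial ℂ := fun j => Lagrange.basis Finset.univ z j with hL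
  have hLdeg : ∀ j, (L j).natDegree < n := by
    intro j
    rw [hL, Lagrange.natDegree_basis hinj (Finset.mem_univ j), Finset.card_univ, Fintype.card_fin]
    omega
  -- candidate inverse matrix
  set W : Matrix (Fin n) (Fin n) ℂ := Matrix.of fun i j => (L j).coeff i with hW
  have hVW : V * W = 1 := by
    ext j l
    rw [Matrix.mul_apply, Matrix.one_apply]
    have := Polynomial.eval_eq_sum_range' (hLdeg l) (z j)
    have hsum : ∑ k : Fin n, V j k * W k l = (L l).eval (z j) := by
      rw [this, ← Fin.sum_univ_eq_sum_range fun i => (L l).coeff i * z j ^ i]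
      refine Finset.sum_congr rfl fun k _ => ?_
      simp [hV, hW, mul_comm]
    rw [hsum]
    by_cases hjl : j = l
    · subst hjl
      simp [hL, Lagrange.eval_basis_self hinj (Finset.mem_univ j)]
    · simp [hL, Lagrange.eval_basis_of_ne (Ne.symm hjl) (Finset.mem_univ j), hjl]
  have hVinv : V⁻¹ = W := Matrix.inv_eq_right_inv hVW
  -- column sums bound
  set M : ℝ := Finset.univ.sup' (Finset.univ_nonempty_iff.mpr ⟨⟨0, hn⟩⟩)
      fun j => ∏ k ∈ Finset.univ.erase j,
        (1 + ‖z k‖) / ‖z j - z k‖ with hM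
  have hcol : ∀ j : Fin n, ∑ i : Fin n, ‖W i j‖ ≤ M := by
    intro j
    have h1 : ∑ i : Fin n, ‖W i j‖ = l1 (L j) := by
      rw [l1_eq (hLdeg j), ← Fin.sum_univ_eq_sum_range fun i => ‖(L j).coeff i‖]
      rfl
    have hbasis : L j = ∏ k ∈ Finset.univ.erase j, Lagrange.basisDivisor (z j) (z k) := rfl
    have h2 : l1 (L j) ≤ ∏ k ∈ Finset.univ.erase j,
        (1 + ‖z k‖) / ‖z j - z k‖ := by
      rw [hbasis]
      refine le_trans (l1_prod_le _ _) (le_of_eq ?_)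
      refine Finset.prod_congr rfl fun k hk => ?_
      have hjk : z j ≠ z k := fun h => (Finset.ne_of_mem_erase hk).symm (hz h)
      exact l1_basisDivisor hjk
    rw [h1, hM]
    exact h2.trans (Finset.le_sup' (fun j => ∏ k ∈ Finset.univ.erase j,
      (1 + ‖z k‖) / ‖z j - z k‖) (Finset.mem_univ j))
  have hM0 : 0 ≤ M := by
    rw [hM]
    refine le_trans ?_ (Finset.le_sup' (fun j => ∏ k ∈ Finset.univ.erase j,
      (1 + ‖z k‖) / ‖z j - z k‖) (Finset.mem_univ (⟨0, hn⟩ : Fin n)))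
    positivity
  -- main chain
  set y : Fin n → ℂ := (V⁻¹).mulVec x with hy
  have step1 : Real.sqrt (∑ i, ‖y i‖ ^ 2) ≤ ∑ i, ‖y i‖ := by
    rw [show (∑ i, ‖y i‖) = Real.sqrt ((∑ i, ‖y i‖) ^ 2) from
      (Real.sqrt_sq (Finset.sum_nonneg fun _ _ => norm_nonneg _)).symm]
    exact Real.sqrt_le_sqrt (Finset.sum_sq_le_sq_sum_of_nonneg fun _ _ =>
      norm_nonneg _)
  have step2 : ∑ i, ‖y i‖ ≤ M * ∑ j, ‖x j‖ := by
    calc ∑ i, ‖y i‖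
        ≤ ∑ i, ∑ j, ‖W i j‖ * ‖x j‖ := by
          refine Finset.sum_le_sum fun i _ => ?_
          rw [hy, hVinv, Matrix.mulVec, dotProduct]
          refine le_trans (norm_sum_le _ _) (le_of_eq ?_)
          exact Finset.sum_congr rfl fun j _ => norm_mul _ _
      _ = ∑ j, (∑ i, ‖W i j‖) * ‖x j‖ := by
          rw [Finset.sum_comm]
          exact Finset.sum_congr rfl fun j _ => (Finset.sum_mul _ _ _).symm
      _ ≤ ∑ j, M * ‖x j‖ := by
          refine Finset.sum_le_sum fun j _ => ?_
          exact mul_le_mul_of_nonneg_right (hcol j) (norm_nonneg _)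
      _ = M * ∑ j, ‖x j‖ := by rw [Finset.mul_sum]
  have step3 : ∑ j, ‖x j‖ ≤
      Real.sqrt n * Real.sqrt (∑ i, ‖x i‖ ^ 2) := by
    have h := sq_sum_le_card_mul_sum_sq (s := (Finset.univ : Finset (Fin n)))
      (f := fun j => ‖x j‖)
    rw [Finset.card_univ, Fintype.card_fin] at h
    calc ∑ j, ‖x j‖
        = Real.sqrt ((∑ j, ‖x j‖) ^ 2) :=
          (Real.sqrt_sq (Finset.sum_nonneg fun _ _ => norm_nonneg _)).symm
      _ ≤ Real.sqrt (n * ∑ i, ‖x i‖ ^ 2) := Real.sqrt_le_sqrt h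
      _ = Real.sqrt n * Real.sqrt (∑ i, ‖x i‖ ^ 2) :=
          Real.sqrt_mul (Nat.cast_nonneg n) _
  calc Real.sqrt (∑ i, ‖y i‖ ^ 2)
      ≤ M * ∑ j, ‖x j‖ := step1.trans step2
    _ ≤ M * (Real.sqrt n * Real.sqrt (∑ i, ‖x i‖ ^ 2)) :=
        mul_le_mul_of_nonneg_left step3 hM0
    _ = Real.sqrt n * M * Real.sqrt (∑ i, ‖x i‖ ^ 2) := by ring
end

section
/- Let $K_k \subset \mathbb{R}^n$ denote the set of tangent vectors of order $k$ for a control-affine system $\dot y = f_0(y) + u f_1(y)$ (with $f_0, f_1$ globally Lipschitz and bounded, $f_0(0)=0$). If $\xi_1, \dots, \xi_N \in K_k$ and $\lambda_1, \dots, \lambda_N \ge 0$ with $\lambda_1 + \dots + \lambda_N \le 1$, then $\lambda_1^k \xi_1 + \dots + \lambda_N^k \xi_N \in K_k$. -/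
open MeasureTheory Set

/-- `ξ` is a tangent vector of order `k` for the control-affine system
`y' = f₀(y) + u f₁(y)` at the equilibrium `0`: there is a family of control variations
`u_T` with `‖u_T‖_{L¹} ≤ T` whose endpoint map satisfies `y(T;u_T,0) = T^k ξ + O(T^{k+1})`. -/
def IsTangentVector {n : ℕ} (f₀ f₁ : EuclideanSpace ℝ (Fin n) → EuclideanSpace ℝ (Fin n))
    (k : ℕ) (ξ : EuclideanSpace ℝ (Fin n)) : Prop :=
  ∃ (u : ℝ → ℝ → ℝ) (C T₀ : ℝ), 0 < T₀ ∧ 0 < C ∧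
    ∀ T ∈ Set.Ioc (0:ℝ) T₀,
      IntervalIntegrable (u T) volume 0 T ∧
      (∫ t in (0:ℝ)..T, |u T t|) ≤ T ∧
      ∃ y : ℝ → EuclideanSpace ℝ (Fin n),
        ContinuousOn y (Set.Icc 0 T) ∧
        (∀ t ∈ Set.Icc 0 T, y t = ∫ s in (0:ℝ)..t, (f₀ (y s) + u T s • f₁ (y s))) ∧
        ‖y T - (T ^ k) • ξ‖ ≤ C * T ^ (k + 1)

set_option maxHeartbeats 1000000

/-- scalar-integrable times bounded continuous vector is interval integrable -/
lemma intervalIntegrable_smul_bdd {n : ℕ} {v : ℝ → ℝ} {g : ℝ → EuclideanSpace ℝ (Fin n)}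
    {α β M : ℝ} (hv : IntervalIntegrable v volume α β) (hg : Continuous g)
    (hM : ∀ x, ‖g x‖ ≤ M) :
    IntervalIntegrable (fun s => v s • g s) volume α β := by
  rw [intervalIntegrable_iff] at hv ⊢
  refine (hv.norm.mul_const M).mono'
    (hv.aestronglyMeasurable.smul hg.aestronglyMeasurable) ?_
  filter_upwards with s
  rw [norm_smul]
  exact mul_le_mul_of_nonneg_left (hM s) (norm_nonneg _)

lemma continuous_of_lip {n : ℕ} {f : EuclideanSpace ℝ (Fin n) → EuclideanSpace ℝ (Fin n)}
    {L : ℝ} (hL : 0 ≤ L) (hf : ∀ x y, ‖f x - f y‖ ≤ L * ‖x - y‖) : Continuous f := by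
  refine (LipschitzWith.of_dist_le_mul (K := L.toNNReal) fun x y => ?_).continuous
  rw [dist_eq_norm, dist_eq_norm, Real.coe_toNNReal _ hL]
  exact hf x y

lemma isTangentVector_zero {n : ℕ} {f₀ f₁ : EuclideanSpace ℝ (Fin n) → EuclideanSpace ℝ (Fin n)}
    (hf₀0 : f₀ 0 = 0) (k : ℕ) : IsTangentVector f₀ f₁ k 0 := by
  refine ⟨fun _ _ => 0, 1, 1, one_pos, one_pos, fun T hT => ?_⟩
  refine ⟨intervalIntegrable_const, by simp [hT.1.le], fun _ => 0, continuousOn_const,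
    fun t _ => by simp [hf₀0], ?_⟩
  have : (0:ℝ) ≤ T ^ (k+1) := pow_nonneg hT.1.le _
  simpa using this

lemma isTangentVector_pair {n : ℕ}
    {f₀ f₁ : EuclideanSpace ℝ (Fin n) → EuclideanSpace ℝ (Fin n)} {L₀ L₁ M₁ : ℝ}
    (hf₀lip : ∀ x y, ‖f₀ x - f₀ y‖ ≤ L₀ * ‖x - y‖)
    (hf₁lip : ∀ x y, ‖f₁ x - f₁ y‖ ≤ L₁ * ‖x - y‖)
    (hf₁bdd : ∀ x, ‖f₁ x‖ ≤ M₁)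
    (k : ℕ) (hk : 1 ≤ k) {ξ₁ ξ₂ : EuclideanSpace ℝ (Fin n)}
    (h₁ : IsTangentVector f₀ f₁ k ξ₁) (h₂ : IsTangentVector f₀ f₁ k ξ₂)
    {a b : ℝ} (ha : 0 ≤ a) (hb : 0 ≤ b) (hab : a + b = 1) :
    IsTangentVector f₀ f₁ k (a ^ k • ξ₁ + b ^ k • ξ₂) := by
  rcases eq_or_lt_of_le ha with ha0|ha0
  · have hb1 : b = 1 := by linarith
    have : a ^ k • ξ₁ + b ^ k • ξ₂ = ξ₂ := by
      rw [← ha0, hb1, zero_pow (by omega : k ≠ 0)]; simp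
    rwa [this]
  rcases eq_or_lt_of_le hb with hb0|hb0
  · have ha1 : a = 1 := by linarith
    have : a ^ k • ξ₁ + b ^ k • ξ₂ = ξ₁ := by
      rw [← hb0, ha1, zero_pow (by omega : k ≠ 0)]; simp
    rwa [this]
  have ha1 : a ≤ 1 := by linarith
  have hb1 : b ≤ 1 := by linarith
  obtain ⟨u₁, C₁, T₁, hT₁, hC₁, H₁⟩ := h₁
  obtain ⟨u₂, C₂, T₂, hT₂, hC₂, H₂⟩ := h₂
  set ℓ₀ : ℝ := max L₀ 0 with hℓ₀def
  set ℓ₁ : ℝ := max L₁ 0 with hℓ₁def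
  have hℓ₀ : 0 ≤ ℓ₀ := le_max_right _ _
  have hℓ₁ : 0 ≤ ℓ₁ := le_max_right _ _
  have hf₀lip' : ∀ x y, ‖f₀ x - f₀ y‖ ≤ ℓ₀ * ‖x - y‖ := fun x y =>
    (hf₀lip x y).trans (mul_le_mul_of_nonneg_right (le_max_left _ _) (norm_nonneg _))
  have hf₁lip' : ∀ x y, ‖f₁ x - f₁ y‖ ≤ ℓ₁ * ‖x - y‖ := fun x y =>
    (hf₁lip x y).trans (mul_le_mul_of_nonneg_right (le_max_left _ _) (norm_nonneg _))
  have hf₀cont : Continuous f₀ := continuous_of_lip hℓ₀ hf₀lip'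
  have hf₁cont : Continuous f₁ := continuous_of_lip hℓ₁ hf₁lip'
  have hM : ∀ x, ‖f₁ x‖ ≤ max M₁ 0 := fun x => (hf₁bdd x).trans (le_max_left _ _)
  set T₀ : ℝ := min (min (T₁ / a) (T₂ / b)) (1 / (2 * (ℓ₀ + ℓ₁) + 2)) with hT₀def
  have hT₀pos : 0 < T₀ := by
    refine lt_min (lt_min (div_pos hT₁ ha0) (div_pos hT₂ hb0)) (by positivity)
  set C : ℝ := C₁ + C₂ + 2 * (ℓ₀ + ℓ₁) * (‖ξ₁‖ + C₁ * T₀) + 1 with hCdef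
  have hCpos : 0 < C := by
    have h1 : 0 ≤ 2 * (ℓ₀ + ℓ₁) * (‖ξ₁‖ + C₁ * T₀) := by
      apply mul_nonneg (by linarith)
      have := norm_nonneg ξ₁
      nlinarith [hT₀pos.le, hC₁.le]
    nlinarith [hC₁, hC₂]
  refine ⟨fun T t => if t ≤ a * T then u₁ (a * T) t else u₂ (b * T) (t - a * T),
    C, T₀, hT₀pos, hCpos, ?_⟩
  rintro T ⟨hTpos, hTle⟩
  set τ : ℝ := a * T with hτdef
  set S : ℝ := b * T with hSdef
  have hτpos : 0 < τ := mul_pos ha0 hTpos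
  have hSpos : 0 < S := mul_pos hb0 hTpos
  have hτS : τ + S = T := by rw [hτdef, hSdef, ← add_mul, hab, one_mul]
  have hτT : τ ≤ T := by nlinarith
  have hST : S ≤ T := by nlinarith
  have hsmall : (ℓ₀ + ℓ₁) * T ≤ 1 / 2 := by
    have h1 : T ≤ 1 / (2 * (ℓ₀ + ℓ₁) + 2) := hTle.trans (min_le_right _ _)
    have h2 : (ℓ₀ + ℓ₁) * T ≤ (ℓ₀ + ℓ₁) * (1 / (2 * (ℓ₀ + ℓ₁) + 2)) :=
      mul_le_mul_of_nonneg_left h1 (by linarith)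
    have h3 : (ℓ₀ + ℓ₁) * (1 / (2 * (ℓ₀ + ℓ₁) + 2)) ≤ 1 / 2 := by
      rw [mul_one_div, div_le_div_iff₀ (by linarith) two_pos]
      linarith
    linarith
  obtain ⟨hu₁int, hu₁L1, y₁, hy₁c, hy₁eq, hy₁est⟩ :=
    H₁ τ ⟨hτpos, by
      have := hTle.trans ((min_le_left _ _).trans (min_le_left _ _))
      calc τ = a * T := rfl
        _ ≤ a * (T₁ / a) := mul_le_mul_of_nonneg_left this ha
        _ = T₁ := by field_simp⟩
  obtain ⟨hu₂int, hu₂L1, y₂, hy₂c, hy₂eq, hy₂est⟩ :=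
    H₂ S ⟨hSpos, by
      have := hTle.trans ((min_le_left _ _).trans (min_le_right _ _))
      calc S = b * T := rfl
        _ ≤ b * (T₂ / b) := mul_le_mul_of_nonneg_left this hb
        _ = T₂ := by field_simp⟩
  -- the contraction setup on C(Icc 0 S, E)
  set p : EuclideanSpace ℝ (Fin n) := y₁ τ with hpdef
  set u : ℝ → ℝ := u₂ S with hudef
  set pr : ℝ → Icc (0:ℝ) S := projIcc 0 S hSpos.le with hprdef
  set G : C(Icc (0:ℝ) S, EuclideanSpace ℝ (Fin n)) → ℝ → EuclideanSpace ℝ (Fin n) :=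
    fun w s => f₀ (w (pr s)) + u s • f₁ (w (pr s)) with hGdef
  have hGint : ∀ w, IntervalIntegrable (G w) volume 0 S := by
    intro w
    have hwc : Continuous fun s => w (pr s) := w.continuous.comp continuous_projIcc
    exact ((hf₀cont.comp hwc).intervalIntegrable _ _).add
      (intervalIntegrable_smul_bdd hu₂int (hf₁cont.comp hwc) fun x => hM _)
  have hsub : ∀ t ∈ Icc (0:ℝ) S, uIcc (0:ℝ) t ⊆ uIcc (0:ℝ) S := by
    intro t ht
    rw [uIcc_of_le ht.1, uIcc_of_le hSpos.le]
    exact Icc_subset_Icc_right ht.2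
  set Φ : C(Icc (0:ℝ) S, EuclideanSpace ℝ (Fin n)) → C(Icc (0:ℝ) S, EuclideanSpace ℝ (Fin n)) :=
    fun w => ⟨fun t => p + ∫ s in (0:ℝ)..(t:ℝ), G w s, by
      refine continuous_const.add ?_
      have hc : ContinuousOn (fun x => ∫ s in (0:ℝ)..x, G w s) (uIcc (0:ℝ) S) :=
        intervalIntegral.continuousOn_primitive_interval' (hGint w) left_mem_uIcc
      exact hc.comp_continuous continuous_subtype_val fun x => by
        rw [uIcc_of_le hSpos.le]; exact x.2⟩ with hΦdef
  -- the key integral estimate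
  have key : ∀ (w w' : C(Icc (0:ℝ) S, EuclideanSpace ℝ (Fin n))) (D : ℝ), 0 ≤ D →
      (∀ s : Icc (0:ℝ) S, ‖w s - w' s‖ ≤ D) → ∀ t ∈ Icc (0:ℝ) S,
      ‖(∫ s in (0:ℝ)..t, G w s) - ∫ s in (0:ℝ)..t, G w' s‖ ≤ (ℓ₀ + ℓ₁) * T * D := by
    intro w w' D hDnn hD t ht
    have hw : IntervalIntegrable (G w) volume 0 t := (hGint w).mono_set (hsub t ht)
    have hw' : IntervalIntegrable (G w') volume 0 t := (hGint w').mono_set (hsub t ht)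
    have huabs : IntervalIntegrable (fun s => |u s|) volume 0 t :=
      hu₂int.abs.mono_set (hsub t ht)
    have hmaj : IntervalIntegrable (fun s => (ℓ₀ + ℓ₁ * |u s|) * D) volume 0 t :=
      (intervalIntegrable_const.add (huabs.const_mul ℓ₁)).mul_const D
    rw [← intervalIntegral.integral_sub hw hw']
    calc ‖∫ s in (0:ℝ)..t, (G w s - G w' s)‖
        ≤ ∫ s in (0:ℝ)..t, ‖G w s - G w' s‖ :=
          intervalIntegral.norm_integral_le_integral_norm ht.1
      _ ≤ ∫ s in (0:ℝ)..t, (ℓ₀ + ℓ₁ * |u s|) * D := by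
          refine intervalIntegral.integral_mono_on ht.1 (hw.sub hw').norm hmaj ?_
          intro s hs
          have e1 : G w s - G w' s
              = (f₀ (w (pr s)) - f₀ (w' (pr s))) + u s • (f₁ (w (pr s)) - f₁ (w' (pr s))) := by
            simp only [hGdef, smul_sub]; abel
          have e2 : ‖w (pr s) - w' (pr s)‖ ≤ D := hD _
          calc ‖G w s - G w' s‖
              ≤ ‖f₀ (w (pr s)) - f₀ (w' (pr s))‖ + ‖u s • (f₁ (w (pr s)) - f₁ (w' (pr s)))‖ := by
                rw [e1]; exact norm_add_le _ _
            _ ≤ ℓ₀ * ‖w (pr s) - w' (pr s)‖ + |u s| * (ℓ₁ * ‖w (pr s) - w' (pr s)‖) := by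
                refine add_le_add (hf₀lip' _ _) ?_
                rw [norm_smul, Real.norm_eq_abs]
                exact mul_le_mul_of_nonneg_left (hf₁lip' _ _) (abs_nonneg _)
            _ ≤ (ℓ₀ + ℓ₁ * |u s|) * D := by
                have h1 : ℓ₀ * ‖w (pr s) - w' (pr s)‖ ≤ ℓ₀ * D :=
                  mul_le_mul_of_nonneg_left e2 hℓ₀
                have h2 : |u s| * (ℓ₁ * ‖w (pr s) - w' (pr s)‖) ≤ |u s| * (ℓ₁ * D) :=
                  mul_le_mul_of_nonneg_left (mul_le_mul_of_nonneg_left e2 hℓ₁) (abs_nonneg _)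
                nlinarith [abs_nonneg (u s)]
      _ = (ℓ₀ * t + ℓ₁ * ∫ s in (0:ℝ)..t, |u s|) * D := by
          rw [intervalIntegral.integral_mul_const, intervalIntegral.integral_add
            intervalIntegrable_const (huabs.const_mul ℓ₁),
            intervalIntegral.integral_const_mul, intervalIntegral.integral_const]
          simp [mul_comm]
      _ ≤ (ℓ₀ + ℓ₁) * T * D := by
          have hI : (∫ s in (0:ℝ)..t, |u s|) ≤ S := by
            refine le_trans ?_ hu₂L1
            refine intervalIntegral.integral_mono_interval le_rfl ht.1 ht.2
              (Filter.Eventually.of_forall fun s => abs_nonneg _) hu₂int.abs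
          have hI0 : (0:ℝ) ≤ ∫ s in (0:ℝ)..t, |u s| :=
            intervalIntegral.integral_nonneg ht.1 fun s _ => abs_nonneg _
          have h1 : ℓ₀ * t + ℓ₁ * ∫ s in (0:ℝ)..t, |u s| ≤ (ℓ₀ + ℓ₁) * T := by
            have := mul_le_mul_of_nonneg_left (ht.2.trans hST) hℓ₀
            have := mul_le_mul_of_nonneg_left (hI.trans hST) hℓ₁
            nlinarith
          exact mul_le_mul_of_nonneg_right h1 hDnn
  -- contraction
  have hΦdist : ∀ w w', dist (Φ w) (Φ w') ≤ (1/2) * dist w w' := by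
    intro w w'
    rw [ContinuousMap.dist_le (by positivity)]
    intro t
    have h1 := key w w' (dist w w') dist_nonneg
      (fun s => by rw [← dist_eq_norm]; exact ContinuousMap.dist_apply_le_dist s) t t.2
    calc dist (Φ w t) (Φ w' t)
        = ‖(∫ s in (0:ℝ)..(t:ℝ), G w s) - ∫ s in (0:ℝ)..(t:ℝ), G w' s‖ := by
          rw [dist_eq_norm]; show ‖(p + _) - (p + _)‖ = _; rw [add_sub_add_left_eq_sub]
      _ ≤ (ℓ₀ + ℓ₁) * T * dist w w' := h1
      _ ≤ (1/2) * dist w w' := mul_le_mul_of_nonneg_right hsmall dist_nonneg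
  have hΦcontr : ContractingWith (1/2 : NNReal) Φ :=
    ⟨by exact_mod_cast (by norm_num : (1/2:ℝ) < 1), LipschitzWith.of_dist_le_mul (by
      intro w w'
      simpa using hΦdist w w')⟩
  set z := ContractingWith.fixedPoint Φ hΦcontr with hzdef
  have hzfix : Φ z = z := hΦcontr.fixedPoint_isFixedPt
  set yy : C(Icc (0:ℝ) S, EuclideanSpace ℝ (Fin n)) := ⟨(Icc (0:ℝ) S).restrict y₂, hy₂c.restrict⟩
    with hyydef
  have hGyy : ∀ t ∈ Icc (0:ℝ) S, (∫ s in (0:ℝ)..t, G yy s) = y₂ t := by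
    intro t ht
    rw [hy₂eq t ht]
    apply intervalIntegral.integral_congr
    intro s hs
    rw [uIcc_of_le ht.1] at hs
    have hs' : s ∈ Icc (0:ℝ) S := ⟨hs.1, hs.2.trans ht.2⟩
    simp only [hGdef, hprdef, projIcc_of_mem hSpos.le hs']
    rfl
  have hΦyy : ∀ t : Icc (0:ℝ) S, Φ yy t = p + yy t := by
    intro t
    show p + (∫ s in (0:ℝ)..(t:ℝ), G yy s) = p + y₂ t
    rw [hGyy t t.2]
  set v : C(Icc (0:ℝ) S, EuclideanSpace ℝ (Fin n)) := yy + ContinuousMap.const _ p with hvdef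
  have hΦyyv : Φ yy = v := by
    apply ContinuousMap.ext
    intro t
    rw [hΦyy t]
    show p + yy t = yy t + p
    exact add_comm _ _
  have hvyy : dist v yy ≤ ‖p‖ := by
    rw [ContinuousMap.dist_le (norm_nonneg p)]
    intro t
    show dist (yy t + p) (yy t) ≤ ‖p‖
    rw [dist_eq_norm, add_sub_cancel_left]
  have hzv : dist z v ≤ ‖p‖ := by
    have h1 : dist z v ≤ (1/2) * dist z yy := by
      calc dist z v = dist (Φ z) (Φ yy) := by rw [hzfix, hΦyyv]
        _ ≤ (1/2) * dist z yy := hΦdist z yy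
    have h2 : dist z yy ≤ dist z v + dist v yy := dist_triangle _ _ _
    linarith
  have hz_yy : ∀ s : Icc (0:ℝ) S, ‖z s - yy s‖ ≤ 2 * ‖p‖ := by
    intro s
    have h1 : dist (z s) (v s) ≤ dist z v := ContinuousMap.dist_apply_le_dist s
    have h2 : ‖z s - yy s‖ ≤ dist (z s) (v s) + ‖v s - yy s‖ := by
      rw [dist_eq_norm]
      exact norm_sub_le_norm_sub_add_norm_sub _ _ _
    have h3 : ‖v s - yy s‖ = ‖p‖ := by
      show ‖(yy s + p) - yy s‖ = ‖p‖
      rw [add_sub_cancel_left]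
    linarith [hzv, h1]
  have hSmem : S ∈ Icc (0:ℝ) S := ⟨hSpos.le, le_rfl⟩
  have hδ : ‖z ⟨S, hSmem⟩ - p - y₂ S‖ ≤ (ℓ₀ + ℓ₁) * T * (2 * ‖p‖) := by
    have e1 : z ⟨S, hSmem⟩ = p + ∫ s in (0:ℝ)..S, G z s := by
      conv_lhs => rw [← hzfix]
      rfl
    have e2 : y₂ S = ∫ s in (0:ℝ)..S, G yy s := (hGyy S hSmem).symm
    have e3 : z ⟨S, hSmem⟩ - p - y₂ S
        = (∫ s in (0:ℝ)..S, G z s) - ∫ s in (0:ℝ)..S, G yy s := by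
      rw [e1, e2]; abel
    rw [e3]
    exact key z yy (2 * ‖p‖) (by positivity) hz_yy S hSmem
  have hτk : τ ^ k ≤ T ^ k := pow_le_pow_left₀ hτpos.le hτT k
  have hSk : S ^ k ≤ T ^ k := pow_le_pow_left₀ hSpos.le hST k
  have hτk1 : τ ^ (k+1) ≤ T ^ (k+1) := pow_le_pow_left₀ hτpos.le hτT (k+1)
  have hSk1 : S ^ (k+1) ≤ T ^ (k+1) := pow_le_pow_left₀ hSpos.le hST (k+1)
  have hTk1 : T ^ (k+1) = T ^ k * T := pow_succ T k
  have hp_bound : ‖p‖ ≤ T ^ k * (‖ξ₁‖ + C₁ * T₀) := by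
    have h1 : ‖p‖ ≤ ‖p - τ ^ k • ξ₁‖ + ‖τ ^ k • ξ₁‖ := by
      have := norm_add_le (p - τ ^ k • ξ₁) (τ ^ k • ξ₁)
      simpa using this
    have h2 : ‖τ ^ k • ξ₁‖ = τ ^ k * ‖ξ₁‖ := by
      rw [norm_smul, Real.norm_eq_abs, abs_of_nonneg (by positivity)]
    have h3 : C₁ * τ ^ (k+1) ≤ C₁ * (T ^ k * T₀) := by
      apply mul_le_mul_of_nonneg_left _ hC₁.le
      rw [← hTk1] at *
      calc τ ^ (k+1) ≤ T ^ (k+1) := hτk1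
        _ = T ^ k * T := pow_succ T k
        _ ≤ T ^ k * T₀ := mul_le_mul_of_nonneg_left hTle (by positivity)
    have h4 : τ ^ k * ‖ξ₁‖ ≤ T ^ k * ‖ξ₁‖ := mul_le_mul_of_nonneg_right hτk (norm_nonneg _)
    nlinarith [hy₁est]
  -- ==== assembling the concatenated control and trajectory ====
  have haeq1 : (u₁ τ) =ᵐ[volume.restrict (Set.uIoc (0:ℝ) τ)]
      (fun s => if s ≤ τ then u₁ τ s else u₂ S (s - τ)) := by
    refine (ae_restrict_iff' measurableSet_uIoc).mpr (ae_of_all _ fun s hs => ?_)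
    rw [Set.uIoc_of_le hτpos.le] at hs
    simp only [if_pos hs.2]
  have hu_left : IntervalIntegrable (fun s => if s ≤ τ then u₁ τ s else u₂ S (s - τ))
      volume 0 τ := hu₁int.congr_ae haeq1
  have hcomp : IntervalIntegrable (fun x => u (x - τ)) volume τ T := by
    have h := hu₂int.comp_sub_right τ
    rwa [zero_add, show S + τ = T by linarith] at h
  have haeq2 : (fun x => u (x - τ)) =ᵐ[volume.restrict (Set.uIoc τ T)]
      (fun s => if s ≤ τ then u₁ τ s else u₂ S (s - τ)) := by
    refine (ae_restrict_iff' measurableSet_uIoc).mpr (ae_of_all _ fun s hs => ?_)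
    rw [Set.uIoc_of_le (by linarith : τ ≤ T)] at hs
    simp only [if_neg (not_le.2 hs.1)]; rfl
  have hu_right : IntervalIntegrable (fun s => if s ≤ τ then u₁ τ s else u₂ S (s - τ))
      volume τ T := hcomp.congr_ae haeq2
  have huTint : IntervalIntegrable (fun s => if s ≤ τ then u₁ τ s else u₂ S (s - τ))
      volume 0 T := hu_left.trans hu_right
  have huTL1 : (∫ t in (0:ℝ)..T, |if t ≤ τ then u₁ τ t else u₂ S (t - τ)|) ≤ T := by
    have hsplit := intervalIntegral.integral_add_adjacent_intervals
      (μ := volume) (a := (0:ℝ)) (b := τ) (c := T) hu_left.abs hu_right.abs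
    have e1 : (∫ t in (0:ℝ)..τ, |if t ≤ τ then u₁ τ t else u₂ S (t - τ)|) ≤ τ := by
      have hcg : EqOn (fun t => |if t ≤ τ then u₁ τ t else u₂ S (t - τ)|)
          (fun t => |u₁ τ t|) (uIcc (0:ℝ) τ) := by
        intro s hs
        rw [uIcc_of_le hτpos.le] at hs
        simp only [if_pos hs.2]
      rw [intervalIntegral.integral_congr hcg]
      exact hu₁L1
    have e2 : (∫ t in τ..T, |if t ≤ τ then u₁ τ t else u₂ S (t - τ)|) ≤ S := by
      have hcg : ∀ᵐ s ∂volume, s ∈ Set.uIoc τ T →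
          |if s ≤ τ then u₁ τ s else u₂ S (s - τ)| = |u (s - τ)| := by
        refine ae_of_all _ fun s hs => ?_
        rw [Set.uIoc_of_le (by linarith : τ ≤ T)] at hs
        rw [if_neg (not_le.2 hs.1)]
      rw [intervalIntegral.integral_congr_ae hcg,
        intervalIntegral.integral_comp_sub_right (fun x => |u x|) τ, sub_self,
        show T - τ = S by linarith]
      exact hu₂L1
    linarith [hsplit, e1, e2]
  refine ⟨huTint, huTL1, ?_⟩
  set yc : ℝ → EuclideanSpace ℝ (Fin n) :=
    fun t => if t ≤ τ then y₁ ↑(projIcc 0 τ hτpos.le t) else z (pr (t - τ)) with hycdef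
  have hyccont : Continuous yc := by
    refine Continuous.if_le ?_ ?_ continuous_id continuous_const ?_
    · exact (hy₁c.restrict).comp continuous_projIcc
    · exact (z.continuous.comp continuous_projIcc).comp (continuous_id.sub continuous_const)
    · intro x hx
      rw [hx, sub_self]
      rw [projIcc_right, hprdef, projIcc_left]
      show y₁ τ = z ⟨0, _⟩
      have : z ⟨0, Set.left_mem_Icc.2 hSpos.le⟩ = p + ∫ s in (0:ℝ)..(0:ℝ), G z s := by
        conv_lhs => rw [← hzfix]
        rfl
      rw [this, intervalIntegral.integral_same, add_zero, hpdef]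
  have hyleft : ∀ s ∈ Icc (0:ℝ) τ, yc s = y₁ s := by
    intro s hs
    simp only [hycdef]
    rw [if_pos hs.2, projIcc_of_mem hτpos.le hs]
  have hyright : ∀ s, τ < s → yc s = z (pr (s - τ)) := by
    intro s hs
    simp only [hycdef]
    rw [if_neg (not_le.2 hs)]
  have hFl : IntervalIntegrable
      (fun s => f₀ (yc s) + (if s ≤ τ then u₁ τ s else u₂ S (s - τ)) • f₁ (yc s)) volume 0 τ :=
    ((hf₀cont.comp hyccont).intervalIntegrable _ _).add
      (intervalIntegrable_smul_bdd hu_left (hf₁cont.comp hyccont) fun x => hM _)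
  refine ⟨yc, hyccont.continuousOn, ?_, ?_⟩
  · intro t ht
    show yc t = ∫ s in (0:ℝ)..t,
      (f₀ (yc s) + (if s ≤ τ then u₁ τ s else u₂ S (s - τ)) • f₁ (yc s))
    by_cases hcase : t ≤ τ
    · rw [hyleft t ⟨ht.1, hcase⟩, hy₁eq t ⟨ht.1, hcase⟩]
      apply intervalIntegral.integral_congr
      intro s hs
      rw [uIcc_of_le ht.1] at hs
      have hsτ : s ∈ Icc (0:ℝ) τ := ⟨hs.1, hs.2.trans hcase⟩
      simp only [hyleft s hsτ, if_pos hsτ.2]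
    · push_neg at hcase
      have htm : t - τ ∈ Icc (0:ℝ) S := ⟨by linarith, by linarith [ht.2]⟩
      have hFr : IntervalIntegrable
          (fun s => f₀ (yc s) + (if s ≤ τ then u₁ τ s else u₂ S (s - τ)) • f₁ (yc s))
          volume τ t :=
        ((hf₀cont.comp hyccont).intervalIntegrable _ _).add
          (intervalIntegrable_smul_bdd
            (hu_right.mono_set (by
              rw [uIcc_of_le hcase.le, uIcc_of_le (by linarith : τ ≤ T)]
              exact Icc_subset_Icc_right ht.2))
            (hf₁cont.comp hyccont) fun x => hM _)
      have e0 : yc t = p + ∫ r in (0:ℝ)..(t-τ), G z r := by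
        rw [hyright t hcase, hprdef, projIcc_of_mem hSpos.le htm]
        conv_lhs => rw [← hzfix]
        rfl
      have eq1 : (∫ s in (0:ℝ)..τ,
          (f₀ (yc s) + (if s ≤ τ then u₁ τ s else u₂ S (s - τ)) • f₁ (yc s))) = p := by
        have hcg : EqOn
            (fun s => f₀ (yc s) + (if s ≤ τ then u₁ τ s else u₂ S (s - τ)) • f₁ (yc s))
            (fun s => f₀ (y₁ s) + u₁ τ s • f₁ (y₁ s)) (uIcc (0:ℝ) τ) := by
          intro s hs
          rw [uIcc_of_le hτpos.le] at hs
          simp only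
          rw [hyleft s hs, if_pos hs.2]
        rw [intervalIntegral.integral_congr hcg]
        exact (hy₁eq τ ⟨hτpos.le, le_rfl⟩).symm
      have eq2 : (∫ s in τ..t,
          (f₀ (yc s) + (if s ≤ τ then u₁ τ s else u₂ S (s - τ)) • f₁ (yc s)))
          = ∫ r in (0:ℝ)..(t-τ), G z r := by
        have h1 : (∫ s in τ..t,
            (f₀ (yc s) + (if s ≤ τ then u₁ τ s else u₂ S (s - τ)) • f₁ (yc s)))
            = ∫ r in (0:ℝ)..(t-τ),
              (f₀ (yc (r + τ)) + (if r + τ ≤ τ then u₁ τ (r + τ) else u₂ S (r + τ - τ)) • f₁ (yc (r + τ))) := by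
          rw [intervalIntegral.integral_comp_add_right
            (fun s => f₀ (yc s) + (if s ≤ τ then u₁ τ s else u₂ S (s - τ)) • f₁ (yc s)) τ,
            zero_add, sub_add_cancel]
        rw [h1]
        apply intervalIntegral.integral_congr_ae
        refine ae_of_all _ fun r hr => ?_
        rw [Set.uIoc_of_le (by linarith : (0:ℝ) ≤ t - τ)] at hr
        have hrτ : τ < r + τ := by linarith [hr.1]
        simp only [hyright (r + τ) hrτ, if_neg (not_le.2 hrτ), add_sub_cancel_right]; rfl
      have hadd := intervalIntegral.integral_add_adjacent_intervals hFl hFr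
      rw [e0, ← hadd, eq1, eq2]
  · -- the final estimate
    have hyT : yc T = z ⟨S, hSmem⟩ := by
      rw [hyright T (by linarith : τ < T), hprdef, show T - τ = S by linarith, projIcc_right]
    have hsm : (T:ℝ) ^ k • (a ^ k • ξ₁ + b ^ k • ξ₂) = τ ^ k • ξ₁ + S ^ k • ξ₂ := by
      rw [smul_add, smul_smul, smul_smul, ← mul_pow, ← mul_pow, mul_comm T a, mul_comm T b]
    have hdecomp : yc T - (T:ℝ) ^ k • (a ^ k • ξ₁ + b ^ k • ξ₂)
        = (z ⟨S, hSmem⟩ - p - y₂ S) + (p - τ ^ k • ξ₁) + (y₂ S - S ^ k • ξ₂) := by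
      rw [hyT, hsm]; abel
    rw [hdecomp]
    have hTk1pos : (0:ℝ) ≤ T ^ (k+1) := by positivity
    calc ‖(z ⟨S, hSmem⟩ - p - y₂ S) + (p - τ ^ k • ξ₁) + (y₂ S - S ^ k • ξ₂)‖
        ≤ ‖z ⟨S, hSmem⟩ - p - y₂ S‖ + ‖p - τ ^ k • ξ₁‖ + ‖y₂ S - S ^ k • ξ₂‖ :=
          norm_add₃_le
      _ ≤ (ℓ₀ + ℓ₁) * T * (2 * ‖p‖) + C₁ * τ ^ (k+1) + C₂ * S ^ (k+1) :=
          add_le_add (add_le_add hδ hy₁est) hy₂est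
      _ ≤ C * T ^ (k+1) := by
          have hA : (ℓ₀ + ℓ₁) * T * (2 * ‖p‖)
              ≤ 2 * (ℓ₀ + ℓ₁) * (‖ξ₁‖ + C₁ * T₀) * T ^ (k+1) := by
            have h1 : 2 * ‖p‖ ≤ 2 * (T ^ k * (‖ξ₁‖ + C₁ * T₀)) := by linarith [hp_bound]
            calc (ℓ₀ + ℓ₁) * T * (2 * ‖p‖)
                ≤ (ℓ₀ + ℓ₁) * T * (2 * (T ^ k * (‖ξ₁‖ + C₁ * T₀))) :=
                  mul_le_mul_of_nonneg_left h1 (mul_nonneg (by linarith) hTpos.le)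
              _ = 2 * (ℓ₀ + ℓ₁) * (‖ξ₁‖ + C₁ * T₀) * T ^ (k+1) := by rw [hTk1]; ring
          have hB : C₁ * τ ^ (k+1) ≤ C₁ * T ^ (k+1) := mul_le_mul_of_nonneg_left hτk1 hC₁.le
          have hB2 : C₂ * S ^ (k+1) ≤ C₂ * T ^ (k+1) := mul_le_mul_of_nonneg_left hSk1 hC₂.le
          have hCT : C * T ^ (k+1) = C₁ * T ^ (k+1) + C₂ * T ^ (k+1)
              + 2 * (ℓ₀ + ℓ₁) * (‖ξ₁‖ + C₁ * T₀) * T ^ (k+1) + T ^ (k+1) := by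
            rw [hCdef]; ring
          linarith

lemma isTangentVector_sum_one {n : ℕ}
    {f₀ f₁ : EuclideanSpace ℝ (Fin n) → EuclideanSpace ℝ (Fin n)} {L₀ L₁ M₁ : ℝ}
    (hf₀lip : ∀ x y, ‖f₀ x - f₀ y‖ ≤ L₀ * ‖x - y‖)
    (hf₁lip : ∀ x y, ‖f₁ x - f₁ y‖ ≤ L₁ * ‖x - y‖)
    (hf₁bdd : ∀ x, ‖f₁ x‖ ≤ M₁)
    (k : ℕ) (hk : 1 ≤ k) :
    ∀ (N : ℕ) (ξ : Fin N → EuclideanSpace ℝ (Fin n)) (lam : Fin N → ℝ),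
      (∀ i, IsTangentVector f₀ f₁ k (ξ i)) → (∀ i, 0 ≤ lam i) → ∑ i, lam i = 1 →
      IsTangentVector f₀ f₁ k (∑ i, (lam i) ^ k • ξ i) := by
  intro N
  induction N with
  | zero =>
    intro ξ lam hξ hlam hsum
    simp at hsum
  | succ N ih =>
    intro ξ lam hξ hlam hsum
    rw [Fin.sum_univ_castSucc] at hsum ⊢
    set μ : ℝ := ∑ i : Fin N, lam (Fin.castSucc i) with hμdef
    have hμnn : 0 ≤ μ := Finset.sum_nonneg fun i _ => hlam _
    rcases eq_or_lt_of_le hμnn with hμ0|hμ0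
    · have hall : ∀ i : Fin N, lam (Fin.castSucc i) = 0 := by
        intro i
        have := (Finset.sum_eq_zero_iff_of_nonneg (fun j _ => hlam (Fin.castSucc j))).mp
          hμ0.symm i (Finset.mem_univ i)
        exact this
      have hlast : lam (Fin.last N) = 1 := by
        linarith [hsum, hμ0]
      have : (∑ i : Fin N, lam (Fin.castSucc i) ^ k • ξ (Fin.castSucc i))
          + lam (Fin.last N) ^ k • ξ (Fin.last N) = ξ (Fin.last N) := by
        rw [hlast]
        simp [hall, zero_pow (by omega : k ≠ 0)]
      rw [this]
      exact hξ _
    · have hη := ih (fun i => ξ (Fin.castSucc i)) (fun i => lam (Fin.castSucc i) / μ)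
        (fun i => hξ _) (fun i => div_nonneg (hlam _) hμnn)
        (by rw [← Finset.sum_div]; rw [← hμdef]; field_simp)
      have hcomb := isTangentVector_pair hf₀lip hf₁lip hf₁bdd k hk hη (hξ (Fin.last N))
        hμnn (hlam (Fin.last N)) hsum
      have : μ ^ k • (∑ i : Fin N, (lam (Fin.castSucc i) / μ) ^ k • ξ (Fin.castSucc i))
          + lam (Fin.last N) ^ k • ξ (Fin.last N)
          = (∑ i : Fin N, lam (Fin.castSucc i) ^ k • ξ (Fin.castSucc i))
          + lam (Fin.last N) ^ k • ξ (Fin.last N) := by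
        congr 1
        rw [Finset.smul_sum]
        refine Finset.sum_congr rfl fun i _ => ?_
        rw [smul_smul, ← mul_pow, mul_div_cancel₀ _ (ne_of_gt hμ0)]
      rwa [this] at hcomb

/-- **Nonlinear convexity of tangent vectors**: if `ξ₁, …, ξ_N ∈ K_k` and
`λᵢ ≥ 0` with `∑ λᵢ ≤ 1`, then `∑ λᵢ^k ξᵢ ∈ K_k`. -/
theorem tangentVectors_nonlinear_convexity (n : ℕ)
    (f₀ f₁ : EuclideanSpace ℝ (Fin n) → EuclideanSpace ℝ (Fin n))
    (L₀ L₁ M₀ M₁ : ℝ)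
    (hf₀lip : ∀ a b, ‖f₀ a - f₀ b‖ ≤ L₀ * ‖a - b‖)
    (hf₁lip : ∀ a b, ‖f₁ a - f₁ b‖ ≤ L₁ * ‖a - b‖)
    (hf₀bdd : ∀ a, ‖f₀ a‖ ≤ M₀) (hf₁bdd : ∀ a, ‖f₁ a‖ ≤ M₁)
    (hf₀0 : f₀ 0 = 0)
    (k : ℕ) (hk : 1 ≤ k) (N : ℕ)
    (ξ : Fin N → EuclideanSpace ℝ (Fin n))
    (hξ : ∀ i, IsTangentVector f₀ f₁ k (ξ i))
    (lam : Fin N → ℝ) (hlam : ∀ i, 0 ≤ lam i) (hsum : ∑ i, lam i ≤ 1) :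
    IsTangentVector f₀ f₁ k (∑ i, (lam i) ^ k • ξ i) := by
  have h := isTangentVector_sum_one hf₀lip hf₁lip hf₁bdd k hk (N + 1)
    (Fin.snoc ξ 0) (Fin.snoc lam (1 - ∑ i, lam i))
    (fun i => by
      induction i using Fin.lastCases with
      | last => simpa using isTangentVector_zero hf₀0 k
      | cast j => simpa using hξ j)
    (fun i => by
      induction i using Fin.lastCases with
      | last => simpa using by linarith
      | cast j => simpa using hlam j)
    (by rw [Fin.sum_univ_castSucc]; simp)
  rw [Fin.sum_univ_castSucc] at h
  simpa using h
end

section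
/- Let $K_k$ denote the set of order-$k$ tangent vectors of a control-affine system $\dot y = f_0(y) + u f_1(y)$ with $f_0(0)=0$. The following three conditions are equivalent: (1) $0$ lies in the interior of $K_\infty := \bigcup_{k \ge 1} K_k$; (2) there exist $\xi_1, \dots, \xi_N \in K_\infty$ with $0$ in the interior of their convex hull; (3) there exist $k \ge 1$ and $r > 0$ such that $\pm r e_1, \dots, \pm r e_n \in K_k$. -/
open MeasureTheory Set
open scoped NNReal

/-- The set `K_∞ = ⋃_{k ≥ 1} K_k` of tangent vectors of some order. -/
def KInf {n : ℕ} (f₀ f₁ : EuclideanSpace ℝ (Fin n) → EuclideanSpace ℝ (Fin n)) :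
    Set (EuclideanSpace ℝ (Fin n)) :=
  {ξ | ∃ k, 1 ≤ k ∧ IsTangentVector f₀ f₁ k ξ}

variable {n : ℕ} {f₀ f₁ : EuclideanSpace ℝ (Fin n) → EuclideanSpace ℝ (Fin n)}
  {L₀ L₁ M₁ : ℝ}


lemma lipf (hf₀lip : ∀ a b, ‖f₀ a - f₀ b‖ ≤ L₀ * ‖a - b‖) (hL₀ : 0 ≤ L₀) :
    Continuous f₀ := by
  have : LipschitzWith (Real.toNNReal L₀) f₀ := by
    intro a b
    rw [edist_nndist, edist_nndist, ← ENNReal.coe_mul, ENNReal.coe_le_coe, ← NNReal.coe_le_coe]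
    push_cast
    rw [Real.coe_toNNReal _ hL₀]
    calc (nndist (f₀ a) (f₀ b) : ℝ) = ‖f₀ a - f₀ b‖ := by
          rw [coe_nndist, dist_eq_norm]
      _ ≤ L₀ * ‖a - b‖ := hf₀lip a b
      _ = L₀ * nndist a b := by rw [coe_nndist, dist_eq_norm]
  exact this.continuous

lemma integrand_II
    (hf₀lip : ∀ a b, ‖f₀ a - f₀ b‖ ≤ L₀ * ‖a - b‖) (hL₀ : 0 ≤ L₀)
    (hf₁lip : ∀ a b, ‖f₁ a - f₁ b‖ ≤ L₁ * ‖a - b‖) (hL₁ : 0 ≤ L₁)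
    (hf₁bdd : ∀ a, ‖f₁ a‖ ≤ M₁)
    {u : ℝ → ℝ} {y : ℝ → EuclideanSpace ℝ (Fin n)} {v w : ℝ}
    (hvw : v ≤ w) (hu : IntervalIntegrable u volume v w) (hy : ContinuousOn y (Icc v w)) :
    IntervalIntegrable (fun s => f₀ (y s) + u s • f₁ (y s)) volume v w := by
  have hf₀c : Continuous f₀ := lipf hf₀lip hL₀
  have h1 : IntervalIntegrable (fun s => f₀ (y s)) volume v w := by
    apply ContinuousOn.intervalIntegrable
    rw [uIcc_of_le hvw]
    exact hf₀c.comp_continuousOn hy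
  have h2 : IntervalIntegrable (fun s => u s • f₁ (y s)) volume v w := by
    rw [intervalIntegrable_iff_integrableOn_Ioc_of_le hvw]
    have huIoc : IntegrableOn u (Ioc v w) volume := by
      rw [intervalIntegrable_iff_integrableOn_Ioc_of_le hvw] at hu
      exact hu
    have hmeas : AEStronglyMeasurable (fun s => u s • f₁ (y s)) (volume.restrict (Ioc v w)) := by
      apply AEStronglyMeasurable.smul huIoc.aestronglyMeasurable
      have : AEStronglyMeasurable (fun s => f₁ (y s)) (volume.restrict (Icc v w)) :=
        (((lipf hf₁lip hL₁).comp_continuousOn hy).aestronglyMeasurable measurableSet_Icc)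
      exact this.mono_measure (Measure.restrict_mono Ioc_subset_Icc_self le_rfl)
    apply Integrable.mono' (g := fun s => |u s| * M₁) (huIoc.abs.mul_const M₁) hmeas
    filter_upwards with s
    rw [norm_smul, Real.norm_eq_abs]
    exact mul_le_mul_of_nonneg_left (hf₁bdd (y s)) (abs_nonneg (u s))
  exact h1.add h2

lemma coef_int {u : ℝ → ℝ} {S : ℝ} (hS : 0 ≤ S) (hu : IntervalIntegrable u volume 0 S)
    (hL₀ : 0 ≤ L₀) (hL₁ : 0 ≤ L₁) {t : ℝ} (ht : t ∈ Icc 0 S) :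
    IntervalIntegrable (fun s => L₀ + |u s| * L₁) volume 0 t ∧
    (∫ s in (0:ℝ)..t, (L₀ + |u s| * L₁)) ≤ L₀ * S + L₁ * (∫ s in (0:ℝ)..S, |u s|) := by
  have hut : IntervalIntegrable u volume 0 t :=
    hu.mono_set (by rw [uIcc_of_le ht.1, uIcc_of_le hS]; exact Icc_subset_Icc le_rfl ht.2)
  have hii : IntervalIntegrable (fun s => L₀ + |u s| * L₁) volume 0 t :=
    (intervalIntegrable_const).add (hut.abs.mul_const L₁)
  refine ⟨hii, ?_⟩
  rw [intervalIntegral.integral_add intervalIntegrable_const (hut.abs.mul_const L₁),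
    intervalIntegral.integral_const, intervalIntegral.integral_mul_const, smul_eq_mul,
    sub_zero]
  have h1 : t * L₀ ≤ S * L₀ := mul_le_mul_of_nonneg_right ht.2 hL₀
  have h2 : (∫ s in (0:ℝ)..t, |u s|) ≤ ∫ s in (0:ℝ)..S, |u s| := by
    apply intervalIntegral.integral_mono_interval le_rfl ht.1 ht.2 _ hu.abs
    filter_upwards with s using abs_nonneg (u s)
  nlinarith [mul_le_mul_of_nonneg_left h2 hL₁]

lemma exists_sol
    (hf₀lip : ∀ a b, ‖f₀ a - f₀ b‖ ≤ L₀ * ‖a - b‖)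
    (hf₁lip : ∀ a b, ‖f₁ a - f₁ b‖ ≤ L₁ * ‖a - b‖)
    (hf₁bdd : ∀ a, ‖f₁ a‖ ≤ M₁) (hL₀ : 0 ≤ L₀) (hL₁ : 0 ≤ L₁)
    {S : ℝ} (hS : 0 ≤ S) {u : ℝ → ℝ} (hu : IntervalIntegrable u volume 0 S)
    (hsmall : L₀ * S + L₁ * (∫ t in (0:ℝ)..S, |u t|) ≤ 1/2) (p : EuclideanSpace ℝ (Fin n)) :
    ∃ z : ℝ → EuclideanSpace ℝ (Fin n), Continuous z ∧
      ∀ t ∈ Icc 0 S, z t = p + ∫ s in (0:ℝ)..t, (f₀ (z s) + u s • f₁ (z s)) := by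
  haveI : Fact ((0:ℝ) ≤ S) := ⟨hS⟩
  haveI : CompactSpace (Icc (0:ℝ) S) := isCompact_iff_compactSpace.1 isCompact_Icc
  haveI : Nonempty (Icc (0:ℝ) S) := ⟨⟨0, le_refl 0, hS⟩⟩
  set X := C(Icc (0:ℝ) S, EuclideanSpace ℝ (Fin n))
  -- the extension of y : X to ℝ
  let ext : X → ℝ → EuclideanSpace ℝ (Fin n) := fun y s => y (projIcc 0 S hS s)
  have hext_cont : ∀ y : X, Continuous (ext y) := fun y => y.continuous.comp continuous_projIcc
  have hext_eq : ∀ (y : X) (t : Icc (0:ℝ) S), ext y (t:ℝ) = y t := fun y t => by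
    simp [ext, projIcc_val]
  have hint : ∀ (y : X) (t : ℝ), t ∈ Icc 0 S →
      IntervalIntegrable (fun s => f₀ (ext y s) + u s • f₁ (ext y s)) volume 0 t := by
    intro y t ht
    apply integrand_II hf₀lip hL₀ hf₁lip hL₁ hf₁bdd ht.1
      (hu.mono_set (by rw [uIcc_of_le ht.1, uIcc_of_le hS]; exact Icc_subset_Icc le_rfl ht.2))
      ((hext_cont y).continuousOn)
  -- the Picard operator
  have hΦc : ∀ y : X, Continuous fun t : Icc (0:ℝ) S =>
      p + ∫ s in (0:ℝ)..(t:ℝ), (f₀ (ext y s) + u s • f₁ (ext y s)) := by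
    intro y
    apply continuous_const.add
    have : ContinuousOn (fun t : ℝ => ∫ s in (0:ℝ)..t, (f₀ (ext y s) + u s • f₁ (ext y s)))
        (Icc 0 S) := by
      apply intervalIntegral.continuousOn_primitive_interval'
        (hint y S (right_mem_Icc.2 hS)) (by rw [uIcc_of_le hS]; exact left_mem_Icc.2 hS) |>.mono
      rw [uIcc_of_le hS]
    exact this.comp_continuous continuous_subtype_val (fun t => t.2)
  set Φ : X → X := fun y => ⟨_, hΦc y⟩ with hΦ
  have hval : ∀ (y : X) (t : Icc (0:ℝ) S), Φ y t
      = p + ∫ s in (0:ℝ)..(t:ℝ), (f₀ (ext y s) + u s • f₁ (ext y s)) := fun y t => rfl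
  have hlip : LipschitzWith (1/2 : ℝ≥0) Φ := by
    apply LipschitzWith.of_dist_le_mul
    intro y z
    have hhalf : ((1/2 : ℝ≥0) : ℝ) = 1/2 := by norm_num
    rw [hhalf, ContinuousMap.dist_le (by positivity)]
    intro t
    have hdist : ∀ s : ℝ, ‖ext y s - ext z s‖ ≤ dist y z := by
      intro s
      rw [← dist_eq_norm]
      exact ContinuousMap.dist_apply_le_dist _
    have key : dist (Φ y t) (Φ z t) ≤ ∫ s in (0:ℝ)..(t:ℝ), (L₀ + |u s| * L₁) * dist y z := by
      rw [dist_eq_norm]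
      have : Φ y t - Φ z t = ∫ s in (0:ℝ)..(t:ℝ),
          ((f₀ (ext y s) + u s • f₁ (ext y s)) - (f₀ (ext z s) + u s • f₁ (ext z s))) := by
        rw [hval, hval, intervalIntegral.integral_sub (hint y t t.2) (hint z t t.2)]
        abel
      rw [this]
      calc ‖_‖ ≤ ∫ s in (0:ℝ)..(t:ℝ), ‖(f₀ (ext y s) + u s • f₁ (ext y s)) -
            (f₀ (ext z s) + u s • f₁ (ext z s))‖ :=
          intervalIntegral.norm_integral_le_integral_norm t.2.1
        _ ≤ ∫ s in (0:ℝ)..(t:ℝ), (L₀ + |u s| * L₁) * dist y z := by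
            apply intervalIntegral.integral_mono_on t.2.1 ((hint y t t.2).sub (hint z t t.2)).norm
              (((coef_int hS hu hL₀ hL₁ t.2).1).mul_const _)
            intro s _
            have : (f₀ (ext y s) + u s • f₁ (ext y s)) - (f₀ (ext z s) + u s • f₁ (ext z s))
                = (f₀ (ext y s) - f₀ (ext z s)) + u s • (f₁ (ext y s) - f₁ (ext z s)) := by
              rw [smul_sub]; abel
            rw [this]
            calc ‖_‖ ≤ ‖f₀ (ext y s) - f₀ (ext z s)‖ + ‖u s • (f₁ (ext y s) - f₁ (ext z s))‖ :=
                norm_add_le _ _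
              _ ≤ L₀ * ‖ext y s - ext z s‖ + |u s| * (L₁ * ‖ext y s - ext z s‖) := by
                  rw [norm_smul, Real.norm_eq_abs]
                  exact add_le_add (hf₀lip _ _)
                    (mul_le_mul_of_nonneg_left (hf₁lip _ _) (abs_nonneg _))
              _ ≤ (L₀ + |u s| * L₁) * dist y z := by
                  have h := hdist s
                  have h0 : (0:ℝ) ≤ ‖ext y s - ext z s‖ := norm_nonneg _
                  nlinarith [abs_nonneg (u s), mul_le_mul_of_nonneg_left h hL₀,
                    mul_le_mul_of_nonneg_left h (mul_nonneg (abs_nonneg (u s)) hL₁)]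
    calc dist (Φ y t) (Φ z t) ≤ ∫ s in (0:ℝ)..(t:ℝ), (L₀ + |u s| * L₁) * dist y z := key
      _ = (∫ s in (0:ℝ)..(t:ℝ), (L₀ + |u s| * L₁)) * dist y z := by
          rw [intervalIntegral.integral_mul_const]
      _ ≤ (1/2) * dist y z := by
          apply mul_le_mul_of_nonneg_right _ dist_nonneg
          exact le_trans (coef_int hS hu hL₀ hL₁ t.2).2 hsmall
  have hcw : ContractingWith (1/2) Φ := ⟨by rw [← NNReal.coe_lt_coe]; norm_num, hlip⟩
  obtain ⟨y, hy⟩ := hcw.exists_fixedPoint (ContinuousMap.const _ p)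
    (by apply edist_ne_top)
  have hfix : Φ y = y := hy.1
  refine ⟨ext y, hext_cont y, ?_⟩
  intro t ht
  have h2 : y ⟨t, ht⟩ = Φ y ⟨t, ht⟩ := by rw [hfix]
  rw [hval] at h2
  rw [← hext_eq y ⟨t, ht⟩] at h2
  exact h2

lemma comparison
    (hf₀lip : ∀ a b, ‖f₀ a - f₀ b‖ ≤ L₀ * ‖a - b‖)
    (hf₁lip : ∀ a b, ‖f₁ a - f₁ b‖ ≤ L₁ * ‖a - b‖)
    (hf₁bdd : ∀ a, ‖f₁ a‖ ≤ M₁) (hL₀ : 0 ≤ L₀) (hL₁ : 0 ≤ L₁)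
    {S : ℝ} (hS : 0 ≤ S) {u : ℝ → ℝ} (hu : IntervalIntegrable u volume 0 S)
    (hsmall : L₀ * S + L₁ * (∫ t in (0:ℝ)..S, |u t|) ≤ 1/2)
    {z w : ℝ → EuclideanSpace ℝ (Fin n)} {p : EuclideanSpace ℝ (Fin n)}
    (hzc : ContinuousOn z (Icc 0 S))
    (hz : ∀ t ∈ Icc 0 S, z t = p + ∫ s in (0:ℝ)..t, (f₀ (z s) + u s • f₁ (z s)))
    (hwc : ContinuousOn w (Icc 0 S))
    (hw : ∀ t ∈ Icc 0 S, w t = ∫ s in (0:ℝ)..t, (f₀ (w s) + u s • f₁ (w s))) :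
    ‖z S - p - w S‖ ≤ 2 * ‖p‖ * (L₀ * S + L₁ * (∫ t in (0:ℝ)..S, |u t|)) := by
  have hintz : ∀ t ∈ Icc (0:ℝ) S,
      IntervalIntegrable (fun s => f₀ (z s) + u s • f₁ (z s)) volume 0 t := fun t ht =>
    integrand_II hf₀lip hL₀ hf₁lip hL₁ hf₁bdd ht.1
      (hu.mono_set (by rw [uIcc_of_le ht.1, uIcc_of_le hS]; exact Icc_subset_Icc le_rfl ht.2))
      (hzc.mono (Icc_subset_Icc le_rfl ht.2))
  have hintw : ∀ t ∈ Icc (0:ℝ) S,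
      IntervalIntegrable (fun s => f₀ (w s) + u s • f₁ (w s)) volume 0 t := fun t ht =>
    integrand_II hf₀lip hL₀ hf₁lip hL₁ hf₁bdd ht.1
      (hu.mono_set (by rw [uIcc_of_le ht.1, uIcc_of_le hS]; exact Icc_subset_Icc le_rfl ht.2))
      (hwc.mono (Icc_subset_Icc le_rfl ht.2))
  -- the difference identity
  have hdiff : ∀ t ∈ Icc (0:ℝ) S, z t - w t - p = ∫ s in (0:ℝ)..t,
      ((f₀ (z s) + u s • f₁ (z s)) - (f₀ (w s) + u s • f₁ (w s))) := by
    intro t ht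
    rw [hz t ht, hw t ht, intervalIntegral.integral_sub (hintz t ht) (hintw t ht)]
    abel
  -- sup of the difference
  obtain ⟨tm, htm, htmax⟩ := isCompact_Icc.exists_isMaxOn (nonempty_Icc.2 hS)
    ((hzc.sub hwc).norm)
  set m : ℝ := ‖z tm - w tm‖ with hm
  have hm0 : 0 ≤ m := norm_nonneg _
  have hbound : ∀ s ∈ Icc (0:ℝ) S, ‖z s - w s‖ ≤ m := fun s hs => htmax hs
  -- pointwise bound on integrand difference
  have hptw : ∀ s ∈ Icc (0:ℝ) S,
      ‖(f₀ (z s) + u s • f₁ (z s)) - (f₀ (w s) + u s • f₁ (w s))‖ ≤ (L₀ + |u s| * L₁) * m := by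
    intro s hs
    have h1 : (f₀ (z s) + u s • f₁ (z s)) - (f₀ (w s) + u s • f₁ (w s))
        = (f₀ (z s) - f₀ (w s)) + u s • (f₁ (z s) - f₁ (w s)) := by rw [smul_sub]; abel
    rw [h1]
    calc ‖_‖ ≤ ‖f₀ (z s) - f₀ (w s)‖ + ‖u s • (f₁ (z s) - f₁ (w s))‖ := norm_add_le _ _
      _ ≤ L₀ * ‖z s - w s‖ + |u s| * (L₁ * ‖z s - w s‖) := by
          rw [norm_smul, Real.norm_eq_abs]
          exact add_le_add (hf₀lip _ _) (mul_le_mul_of_nonneg_left (hf₁lip _ _) (abs_nonneg _))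
      _ ≤ (L₀ + |u s| * L₁) * m := by
          have h := hbound s hs
          nlinarith [abs_nonneg (u s), norm_nonneg (z s - w s),
            mul_le_mul_of_nonneg_left h hL₀,
            mul_le_mul_of_nonneg_left h (mul_nonneg (abs_nonneg (u s)) hL₁)]
  -- integral bound
  have hkey : ∀ t ∈ Icc (0:ℝ) S, ‖z t - w t - p‖ ≤
      (L₀ * S + L₁ * (∫ s in (0:ℝ)..S, |u s|)) * m := by
    intro t ht
    rw [hdiff t ht]
    calc ‖_‖ ≤ ∫ s in (0:ℝ)..t, ‖(f₀ (z s) + u s • f₁ (z s)) - (f₀ (w s) + u s • f₁ (w s))‖ :=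
        intervalIntegral.norm_integral_le_integral_norm ht.1
      _ ≤ ∫ s in (0:ℝ)..t, (L₀ + |u s| * L₁) * m := by
          apply intervalIntegral.integral_mono_on ht.1
            ((hintz t ht).sub (hintw t ht)).norm (((coef_int hS hu hL₀ hL₁ ht).1).mul_const _)
          exact fun s hs => hptw s (Icc_subset_Icc le_rfl ht.2 hs)
      _ = (∫ s in (0:ℝ)..t, (L₀ + |u s| * L₁)) * m := intervalIntegral.integral_mul_const _ _
      _ ≤ (L₀ * S + L₁ * (∫ s in (0:ℝ)..S, |u s|)) * m :=
          mul_le_mul_of_nonneg_right (coef_int hS hu hL₀ hL₁ ht).2 hm0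
  -- m ≤ 2‖p‖
  have hm2 : m ≤ 2 * ‖p‖ := by
    have h1 : ‖z tm - w tm - p‖ ≤ (L₀ * S + L₁ * (∫ s in (0:ℝ)..S, |u s|)) * m :=
      hkey tm htm
    have h2 : m - ‖p‖ ≤ ‖z tm - w tm - p‖ := by
      have := norm_sub_norm_le (z tm - w tm) p
      linarith [this]
    have h3 : (L₀ * S + L₁ * (∫ s in (0:ℝ)..S, |u s|)) * m ≤ (1/2) * m := by
      apply mul_le_mul_of_nonneg_right hsmall hm0
    linarith
  have := hkey S (right_mem_Icc.2 hS)
  calc ‖z S - p - w S‖ = ‖z S - w S - p‖ := by rw [show z S - p - w S = z S - w S - p by abel]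
    _ ≤ (L₀ * S + L₁ * (∫ s in (0:ℝ)..S, |u s|)) * m := this
    _ ≤ (L₀ * S + L₁ * (∫ s in (0:ℝ)..S, |u s|)) * (2 * ‖p‖) := by
        apply mul_le_mul_of_nonneg_left hm2
        have h0 : (0:ℝ) ≤ L₀ * S := mul_nonneg hL₀ hS
        have h1 : (0:ℝ) ≤ ∫ s in (0:ℝ)..S, |u s| := by
          apply intervalIntegral.integral_nonneg hS
          exact fun s _ => abs_nonneg (u s)
        positivity
    _ = 2 * ‖p‖ * (L₀ * S + L₁ * (∫ t in (0:ℝ)..S, |u t|)) := by ring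

lemma ae_ne_pt (a : ℝ) : ∀ᵐ s : ℝ ∂volume, s ≠ a := by
  have h : volume ({a} : Set ℝ) = 0 := Real.volume_singleton
  rw [ae_iff]
  convert h using 2
  ext s; simp

lemma glue
    (hf₀lip : ∀ a b, ‖f₀ a - f₀ b‖ ≤ L₀ * ‖a - b‖)
    (hf₁lip : ∀ a b, ‖f₁ a - f₁ b‖ ≤ L₁ * ‖a - b‖)
    (hf₁bdd : ∀ a, ‖f₁ a‖ ≤ M₁) (hL₀ : 0 ≤ L₀) (hL₁ : 0 ≤ L₁)
    {a b : ℝ} (ha : 0 ≤ a) (hb : 0 ≤ b)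
    {u₁ u₂ : ℝ → ℝ} (hu₁ : IntervalIntegrable u₁ volume 0 a)
    (hu₂ : IntervalIntegrable u₂ volume 0 b)
    {y₁ y₂ : ℝ → EuclideanSpace ℝ (Fin n)}
    (hy₁c : ContinuousOn y₁ (Icc 0 a))
    (hy₁ : ∀ t ∈ Icc 0 a, y₁ t = ∫ s in (0:ℝ)..t, (f₀ (y₁ s) + u₁ s • f₁ (y₁ s)))
    (hy₂c : ContinuousOn y₂ (Icc 0 b))
    (hy₂ : ∀ t ∈ Icc 0 b, y₂ t = y₁ a + ∫ s in (0:ℝ)..t, (f₀ (y₂ s) + u₂ s • f₁ (y₂ s))) :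
    ∃ y : ℝ → EuclideanSpace ℝ (Fin n),
      IntervalIntegrable (fun t => if t < a then u₁ t else u₂ (t - a)) volume 0 (a+b) ∧
      (∫ t in (0:ℝ)..(a+b), |if t < a then u₁ t else u₂ (t - a)|)
        = (∫ t in (0:ℝ)..a, |u₁ t|) + (∫ t in (0:ℝ)..b, |u₂ t|) ∧
      ContinuousOn y (Icc 0 (a+b)) ∧
      (∀ t ∈ Icc 0 (a+b), y t = ∫ s in (0:ℝ)..t,
        (f₀ (y s) + (if s < a then u₁ s else u₂ (s - a)) • f₁ (y s))) ∧
      y (a+b) = y₂ b := by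
  classical
  set u : ℝ → ℝ := fun t => if t < a then u₁ t else u₂ (t - a) with hu
  set y : ℝ → EuclideanSpace ℝ (Fin n) := fun t => if t < a then y₁ t else y₂ (t - a) with hy
  have hy₂0 : y₂ 0 = y₁ a := by
    have := hy₂ 0 (left_mem_Icc.2 hb)
    simpa using this
  have hyEq1 : EqOn y y₁ (Icc 0 a) := by
    intro t ht
    by_cases h : t < a
    · simp [hy, h]
    · have : t = a := le_antisymm ht.2 (not_lt.1 h)
      simp [hy, this, hy₂0]
  have hyEq2 : EqOn y (fun t => y₂ (t - a)) (Icc a (a+b)) := by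
    intro t ht
    simp [hy, not_lt.2 ht.1, if_neg]
  -- integrability of u on the two pieces
  have huae1 : ∀ᵐ s ∂(volume.restrict (Ioc (0:ℝ) a)), u s = u₁ s := by
    have h := ae_restrict_of_ae (μ := volume) (s := Ioc (0:ℝ) a) (ae_ne_pt a)
    filter_upwards [h, ae_restrict_mem measurableSet_Ioc] with s hs hsm
    have : s < a := lt_of_le_of_ne hsm.2 hs
    simp [hu, this]
  have huae2 : ∀ᵐ s ∂(volume.restrict (Ioc a (a+b))), u s = u₂ (s - a) := by
    filter_upwards [ae_restrict_mem measurableSet_Ioc] with s hsm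
    simp [hu, not_lt.2 hsm.1.le]
  have hu_II1 : IntervalIntegrable u volume 0 a := by
    rw [intervalIntegrable_iff_integrableOn_Ioc_of_le ha]
    rw [intervalIntegrable_iff_integrableOn_Ioc_of_le ha] at hu₁
    exact hu₁.congr_fun_ae (Filter.EventuallyEq.symm huae1)
  have hu_II2 : IntervalIntegrable u volume a (a+b) := by
    have h2 := hu₂.comp_sub_right a
    rw [zero_add, add_comm b a] at h2
    rw [intervalIntegrable_iff_integrableOn_Ioc_of_le (by linarith : a ≤ a+b)]
    rw [intervalIntegrable_iff_integrableOn_Ioc_of_le (by linarith : a ≤ a+b)] at h2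
    exact h2.congr_fun_ae (Filter.EventuallyEq.symm huae2)
  have hu_II : IntervalIntegrable u volume 0 (a+b) := hu_II1.trans hu_II2
  -- the integral of |u|
  have hint_abs : (∫ t in (0:ℝ)..(a+b), |u t|)
      = (∫ t in (0:ℝ)..a, |u₁ t|) + (∫ t in (0:ℝ)..b, |u₂ t|) := by
    rw [← intervalIntegral.integral_add_adjacent_intervals hu_II1.abs hu_II2.abs]
    congr 1
    · apply intervalIntegral.integral_congr_ae
      rw [uIoc_of_le ha]
      filter_upwards [ae_ne_pt a] with s hs hsm
      have : s < a := lt_of_le_of_ne hsm.2 hs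
      simp [hu, this]
    · have h1 : (∫ t in a..(a+b), |u t|) = ∫ t in a..(a+b), |u₂ (t - a)| := by
        apply intervalIntegral.integral_congr_ae
        rw [uIoc_of_le (by linarith : a ≤ a+b)]
        filter_upwards with s hsm
        simp [hu, not_lt.2 hsm.1.le]
      rw [h1]
      have h2 := intervalIntegral.integral_comp_sub_right (a := a) (b := a+b)
        (fun s => |u₂ s|) a
      simpa using h2
  -- continuity of y
  have hc1 : ContinuousOn y (Icc 0 a) := hy₁c.congr hyEq1
  have hc2 : ContinuousOn y (Icc a (a+b)) := by
    apply ContinuousOn.congr _ hyEq2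
    apply hy₂c.comp (continuous_sub_right a).continuousOn
    intro t ht
    show t - a ∈ Icc 0 b
    exact ⟨by linarith [ht.1], by linarith [ht.2]⟩
  have hcy : ContinuousOn y (Icc 0 (a+b)) := by
    intro t ht
    have hsub : Icc (0:ℝ) (a+b) ⊆ Icc 0 a ∪ Icc a (a+b) := by
      intro s hs
      rcases le_total s a with h | h
      · exact Or.inl ⟨hs.1, h⟩
      · exact Or.inr ⟨h, hs.2⟩
    have c1 : ContinuousWithinAt y (Icc 0 a) t := by
      rcases le_or_gt t a with h | h
      · exact hc1 t ⟨ht.1, h⟩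
      · apply continuousWithinAt_of_notMem_closure
        rw [IsClosed.closure_eq isClosed_Icc]
        exact fun hmem => absurd hmem.2 (not_le.2 h)
    have c2 : ContinuousWithinAt y (Icc a (a+b)) t := by
      rcases le_or_gt a t with h | h
      · exact hc2 t ⟨h, ht.2⟩
      · apply continuousWithinAt_of_notMem_closure
        rw [IsClosed.closure_eq isClosed_Icc]
        exact fun hmem => absurd hmem.1 (not_le.2 h)
    exact (c1.union c2).mono hsub
  -- the integral equation on the first piece
  have heq1 : ∀ t ∈ Icc (0:ℝ) a, y t = ∫ s in (0:ℝ)..t, (f₀ (y s) + u s • f₁ (y s)) := by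
    intro t ht
    have hcongr : (∫ s in (0:ℝ)..t, (f₀ (y s) + u s • f₁ (y s)))
        = ∫ s in (0:ℝ)..t, (f₀ (y₁ s) + u₁ s • f₁ (y₁ s)) := by
      apply intervalIntegral.integral_congr_ae
      rw [uIoc_of_le ht.1]
      filter_upwards [ae_ne_pt a] with s hs hsm
      have hsa : s < a := lt_of_le_of_ne (le_trans hsm.2 ht.2) hs
      simp [hu, hy, hsa]
    rw [hcongr, hyEq1 ht]
    exact hy₁ t ht
  -- the integral equation on the second piece
  have heq2 : ∀ t ∈ Icc a (a+b), y t = ∫ s in (0:ℝ)..t, (f₀ (y s) + u s • f₁ (y s)) := by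
    intro t ht
    have hτ : t - a ∈ Icc (0:ℝ) b := ⟨by linarith [ht.1], by linarith [ht.2]⟩
    have hiF1 : IntervalIntegrable (fun s => f₀ (y s) + u s • f₁ (y s)) volume 0 a :=
      integrand_II hf₀lip hL₀ hf₁lip hL₁ hf₁bdd ha hu_II1 hc1
    have hiF2 : IntervalIntegrable (fun s => f₀ (y s) + u s • f₁ (y s)) volume a t := by
      apply integrand_II hf₀lip hL₀ hf₁lip hL₁ hf₁bdd ht.1
        (hu_II2.mono_set _) (hc2.mono (Icc_subset_Icc le_rfl ht.2))
      rw [uIcc_of_le ht.1, uIcc_of_le (by linarith [ht.1, ht.2] : a ≤ a+b)]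
      exact Icc_subset_Icc le_rfl ht.2
    rw [← intervalIntegral.integral_add_adjacent_intervals hiF1 hiF2]
    have hA : (∫ s in (0:ℝ)..a, (f₀ (y s) + u s • f₁ (y s))) = y₁ a := by
      rw [← heq1 a (right_mem_Icc.2 ha)]
      exact hyEq1 (right_mem_Icc.2 ha)
    have hB : (∫ s in a..t, (f₀ (y s) + u s • f₁ (y s)))
        = ∫ s in (0:ℝ)..(t-a), (f₀ (y₂ s) + u₂ s • f₁ (y₂ s)) := by
      have h1 : (∫ s in a..t, (f₀ (y s) + u s • f₁ (y s)))
          = ∫ s in a..t, (f₀ (y₂ (s-a)) + u₂ (s-a) • f₁ (y₂ (s-a))) := by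
        apply intervalIntegral.integral_congr_ae
        rw [uIoc_of_le ht.1]
        filter_upwards with s hsm
        simp [hu, hy, not_lt.2 hsm.1.le]
      rw [h1]
      have h2 := intervalIntegral.integral_comp_sub_right (a := a) (b := t)
        (fun s => (f₀ (y₂ s) + u₂ s • f₁ (y₂ s))) a
      simpa using h2
    rw [hA, hB, hyEq2 ht]
    exact hy₂ (t-a) hτ
  refine ⟨y, hu_II, hint_abs, hcy, ?_, ?_⟩
  · intro t ht
    rcases le_total t a with h | h
    · exact heq1 t ⟨ht.1, h⟩
    · exact heq2 t ⟨h, ht.2⟩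
  · have h := hyEq2 (right_mem_Icc.2 (by linarith : a ≤ a+b))
    simpa using h

def Reach (f₀ f₁ : EuclideanSpace ℝ (Fin n) → EuclideanSpace ℝ (Fin n))
    (k : ℕ) (c : ℝ) (ζ : EuclideanSpace ℝ (Fin n)) : Prop :=
  ∃ (u : ℝ → ℝ → ℝ) (C T₀ : ℝ), 0 < T₀ ∧ 0 < C ∧
    ∀ T ∈ Set.Ioc (0:ℝ) T₀,
      IntervalIntegrable (u T) volume 0 (c*T) ∧
      (∫ t in (0:ℝ)..(c*T), |u T t|) ≤ c*T ∧
      ∃ y : ℝ → EuclideanSpace ℝ (Fin n),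
        ContinuousOn y (Set.Icc 0 (c*T)) ∧
        (∀ t ∈ Set.Icc 0 (c*T), y t = ∫ s in (0:ℝ)..t, (f₀ (y s) + u T s • f₁ (y s))) ∧
        ‖y (c*T) - (T ^ k) • ζ‖ ≤ C * T ^ (k + 1)

lemma reach_zero (k : ℕ) : Reach f₀ f₁ k 0 0 := by
  refine ⟨fun _ _ => 0, 1, 1, one_pos, one_pos, ?_⟩
  intro T hT
  simp only [zero_mul]
  refine ⟨intervalIntegrable_const, by simp, fun _ => 0, continuousOn_const, ?_, ?_⟩
  · intro t ht
    have : t = 0 := le_antisymm ht.2 ht.1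
    simp [this]
  · simp only [smul_zero, sub_zero, norm_zero, one_mul]
    have := hT.1
    positivity

lemma reach_of_TV {k : ℕ} (hk : 1 ≤ k) {ξ : EuclideanSpace ℝ (Fin n)} {lam : ℝ}
    (h : IsTangentVector f₀ f₁ k ξ) (h0 : 0 ≤ lam) (h1 : lam ≤ 1) :
    Reach f₀ f₁ k lam (lam ^ k • ξ) := by
  rcases eq_or_lt_of_le h0 with rfl | hpos
  · have h00 : (0:ℝ) ^ k • ξ = (0:EuclideanSpace ℝ (Fin n)) := by
      rw [zero_pow (by omega : k ≠ 0), zero_smul]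
    rw [h00]
    exact reach_zero k
  obtain ⟨u, C, T₀, hT₀, hC, hu⟩ := h
  refine ⟨fun T => u (lam * T), C, T₀ / lam, div_pos hT₀ hpos, hC, ?_⟩
  intro T hT
  have hlamT : lam * T ∈ Ioc (0:ℝ) T₀ := by
    constructor
    · exact mul_pos hpos hT.1
    · rw [← le_div_iff₀' hpos]
      exact hT.2
  obtain ⟨hII, hint, y, hyc, hyeq, hyend⟩ := hu (lam * T) hlamT
  refine ⟨hII, hint, y, hyc, hyeq, ?_⟩
  have h2 : (lam * T) ^ k • ξ = (T:ℝ)^k • (lam ^ k • ξ) := by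
    rw [mul_pow, smul_smul, mul_comm]
  rw [← h2]
  calc ‖y (lam * T) - (lam * T) ^ k • ξ‖ ≤ C * (lam * T) ^ (k+1) := hyend
    _ ≤ C * T ^ (k+1) := by
        apply mul_le_mul_of_nonneg_left _ hC.le
        apply pow_le_pow_left₀ (mul_nonneg h0 hT.1.le)
        nlinarith [hT.1]

lemma TV_of_reach (hf₀0 : f₀ 0 = 0)
    (hf₀lip : ∀ a b, ‖f₀ a - f₀ b‖ ≤ L₀ * ‖a - b‖)
    (hf₁lip : ∀ a b, ‖f₁ a - f₁ b‖ ≤ L₁ * ‖a - b‖)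
    (hf₁bdd : ∀ a, ‖f₁ a‖ ≤ M₁) (hL₀ : 0 ≤ L₀) (hL₁ : 0 ≤ L₁)
    {k : ℕ} {c : ℝ} {ζ : EuclideanSpace ℝ (Fin n)}
    (h : Reach f₀ f₁ k c ζ) (h0 : 0 ≤ c) (h1 : c ≤ 1) :
    IsTangentVector f₀ f₁ k ζ := by
  obtain ⟨u, C, T₀, hT₀, hC, hu⟩ := h
  refine ⟨fun T t => if t < (1-c)*T then 0 else u T (t - (1-c)*T), C, T₀, hT₀, hC, ?_⟩
  intro T hT
  obtain ⟨hII, hint, y₂, hy₂c, hy₂eq, hy₂end⟩ := hu T hT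
  have ha : 0 ≤ (1-c)*T := by nlinarith [hT.1]
  have hb : 0 ≤ c*T := by nlinarith [hT.1]
  -- glue the zero trajectory with y₂
  have hzero : ∀ t ∈ Icc (0:ℝ) ((1-c)*T),
      (0 : EuclideanSpace ℝ (Fin n)) = ∫ s in (0:ℝ)..t,
        (f₀ ((fun _ => (0:EuclideanSpace ℝ (Fin n))) s)
          + (fun _ => (0:ℝ)) s • f₁ ((fun _ => (0:EuclideanSpace ℝ (Fin n))) s)) := by
    intro t ht
    simp [hf₀0]
  obtain ⟨z, hwII, hwint, hzc, hzeq, hzend⟩ :=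
    glue hf₀lip hf₁lip hf₁bdd hL₀ hL₁ ha hb
      (intervalIntegrable_const (c := (0:ℝ))) hII
      (continuousOn_const (c := (0:EuclideanSpace ℝ (Fin n)))) (fun t ht => hzero t ht)
      hy₂c (fun t ht => by rw [hy₂eq t ht]; simp)
  have hab : (1-c)*T + c*T = T := by ring
  rw [hab] at hwII hwint hzc hzeq hzend
  refine ⟨hwII, ?_, z, hzc, hzeq, ?_⟩
  · rw [hwint]
    simpa using le_trans hint (by nlinarith [hT.1] : c*T ≤ T)
  · rw [hzend]
    exact hy₂end

set_option maxHeartbeats 1000000 in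
lemma reach_append
    (hf₀lip : ∀ a b, ‖f₀ a - f₀ b‖ ≤ L₀ * ‖a - b‖)
    (hf₁lip : ∀ a b, ‖f₁ a - f₁ b‖ ≤ L₁ * ‖a - b‖)
    (hf₁bdd : ∀ a, ‖f₁ a‖ ≤ M₁) (hL₀ : 0 ≤ L₀) (hL₁ : 0 ≤ L₁)
    {k : ℕ} {c d : ℝ} {ζ η : EuclideanSpace ℝ (Fin n)}
    (hc : 0 ≤ c) (hd : 0 ≤ d) (hd1 : d ≤ 1)
    (h₁ : Reach f₀ f₁ k c ζ) (h₂ : Reach f₀ f₁ k d η) :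
    Reach f₀ f₁ k (c + d) (ζ + η) := by
  obtain ⟨u₁, C₁, S₁, hS₁, hC₁, hu₁⟩ := h₁
  obtain ⟨u₂, C₂, S₂, hS₂, hC₂, hu₂⟩ := h₂
  set ε : ℝ := min 1 (1/(2*(L₀+L₁)+2)) with hε
  have hεpos : 0 < ε := by
    apply lt_min one_pos
    positivity
  set C' : ℝ := C₁ + C₂ + 2*(L₀+L₁)*(‖ζ‖+C₁) + 1 with hC'
  have hC'pos : 0 < C' := by positivity
  refine ⟨fun T t => if t < c*T then u₁ T t else u₂ T (t - c*T), C',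
    min S₁ (min S₂ ε), lt_min hS₁ (lt_min hS₂ hεpos), hC'pos, ?_⟩
  intro T hT
  have hTpos : 0 < T := hT.1
  have hT1 : T ≤ 1 := le_trans hT.2 (le_trans (min_le_right _ _) (le_trans (min_le_right _ _) (min_le_left _ _)))
  have hTε : T ≤ ε := le_trans hT.2 (le_trans (min_le_right _ _) (min_le_right _ _))
  obtain ⟨hII₁, hint₁, y₁, hy₁c, hy₁eq, hy₁end⟩ :=
    hu₁ T ⟨hTpos, le_trans hT.2 (min_le_left _ _)⟩
  obtain ⟨hII₂, hint₂, w, hwc, hweq, hwend⟩ :=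
    hu₂ T ⟨hTpos, le_trans hT.2 (le_trans (min_le_right _ _) (min_le_left _ _))⟩
  have hcT : 0 ≤ c*T := mul_nonneg hc hTpos.le
  have hdT : 0 ≤ d*T := mul_nonneg hd hTpos.le
  -- smallness
  have hsmall : L₀ * (d*T) + L₁ * (∫ t in (0:ℝ)..(d*T), |u₂ T t|) ≤ 1/2 := by
    have h1 : (∫ t in (0:ℝ)..(d*T), |u₂ T t|) ≤ d*T := hint₂
    have h2 : d*T ≤ T := by nlinarith
    have h3 : T ≤ 1/(2*(L₀+L₁)+2) := le_trans hTε (min_le_right _ _)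
    have h4 : (L₀+L₁) * T ≤ (L₀+L₁) * (1/(2*(L₀+L₁)+2)) :=
      mul_le_mul_of_nonneg_left h3 (by positivity)
    have h5 : (L₀+L₁) * (1/(2*(L₀+L₁)+2)) ≤ 1/2 := by
      have hden : (0:ℝ) < 2*(L₀+L₁)+2 := by positivity
      rw [mul_one_div, div_le_div_iff₀ hden two_pos]
      linarith
    nlinarith [mul_le_mul_of_nonneg_left h1 hL₁, mul_le_mul_of_nonneg_left h2 hL₀,
      mul_le_mul_of_nonneg_left h2 hL₁]
  -- existence of the second phase from p
  set p : EuclideanSpace ℝ (Fin n) := y₁ (c*T) with hp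
  obtain ⟨z, hzc, hzeq⟩ := exists_sol hf₀lip hf₁lip hf₁bdd hL₀ hL₁ hdT hII₂ hsmall p
  -- comparison
  have hcomp := comparison hf₀lip hf₁lip hf₁bdd hL₀ hL₁ hdT hII₂ hsmall
    hzc.continuousOn hzeq hwc hweq
  -- glue
  obtain ⟨y, hyII, hyint, hyc, hyeq, hyend⟩ :=
    glue hf₀lip hf₁lip hf₁bdd hL₀ hL₁ hcT hdT hII₁ hII₂ hy₁c hy₁eq
      hzc.continuousOn (fun t ht => hzeq t ht)
  have hab : c*T + d*T = (c+d)*T := by ring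
  rw [hab] at hyII hyint hyc hyeq hyend
  refine ⟨hyII, ?_, y, hyc, hyeq, ?_⟩
  · rw [hyint, ← hab]
    exact add_le_add hint₁ hint₂
  · rw [hyend]
    -- error estimate
    have hpnorm : ‖p‖ ≤ (‖ζ‖ + C₁) * T^k := by
      have h1 : ‖p - T^k • ζ‖ ≤ C₁ * T^(k+1) := hy₁end
      have h2 : ‖p‖ ≤ ‖T^k • ζ‖ + C₁ * T^(k+1) := by
        calc ‖p‖ = ‖T^k • ζ + (p - T^k • ζ)‖ := by rw [add_sub_cancel]
          _ ≤ ‖T^k • ζ‖ + ‖p - T^k • ζ‖ := norm_add_le _ _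
          _ ≤ ‖T^k • ζ‖ + C₁ * T^(k+1) := by linarith
      have h3 : ‖T^k • ζ‖ = T^k * ‖ζ‖ := by
        rw [norm_smul, Real.norm_eq_abs, abs_of_nonneg (by positivity)]
      have h4 : T^(k+1) ≤ T^k := by
        calc T^(k+1) = T^k * T := by ring
          _ ≤ T^k * 1 := by
              apply mul_le_mul_of_nonneg_left hT1 (by positivity)
          _ = T^k := mul_one _
      rw [h3] at h2
      have h5 : C₁ * T^(k+1) ≤ C₁ * T^k := mul_le_mul_of_nonneg_left h4 hC₁.le
      nlinarith
    have hterm1 : ‖z (d*T) - p - w (d*T)‖ ≤ 2*(L₀+L₁)*(‖ζ‖+C₁) * T^(k+1) := by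
      calc ‖z (d*T) - p - w (d*T)‖
          ≤ 2 * ‖p‖ * (L₀ * (d*T) + L₁ * (∫ t in (0:ℝ)..(d*T), |u₂ T t|)) := hcomp
        _ ≤ 2 * ((‖ζ‖ + C₁) * T^k) * ((L₀+L₁) * T) := by
            apply mul_le_mul
            · have : (0:ℝ) ≤ ‖p‖ := norm_nonneg p
              nlinarith
            · have h1 : (∫ t in (0:ℝ)..(d*T), |u₂ T t|) ≤ d*T := hint₂
              have h2 : d*T ≤ T := by nlinarith
              nlinarith [mul_le_mul_of_nonneg_left h1 hL₁, mul_le_mul_of_nonneg_left h2 hL₀,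
                mul_le_mul_of_nonneg_left h2 hL₁]
            · have h1 : (0:ℝ) ≤ ∫ t in (0:ℝ)..(d*T), |u₂ T t| :=
                intervalIntegral.integral_nonneg hdT (fun s _ => abs_nonneg _)
              nlinarith [mul_nonneg hL₀ hdT]
            · positivity
        _ = 2*(L₀+L₁)*(‖ζ‖+C₁) * T^(k+1) := by ring
    have hterm2 : ‖w (d*T) - T^k • η‖ ≤ C₂ * T^(k+1) := hwend
    have hterm3 : ‖p - T^k • ζ‖ ≤ C₁ * T^(k+1) := hy₁end
    have hsplit : z (d*T) - T^k • (ζ + η)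
        = (z (d*T) - p - w (d*T)) + (p - T^k • ζ) + (w (d*T) - T^k • η) := by
      rw [smul_add]; abel
    rw [hsplit]
    calc ‖_‖ ≤ ‖(z (d*T) - p - w (d*T)) + (p - T^k • ζ)‖ + ‖w (d*T) - T^k • η‖ :=
        norm_add_le _ _
      _ ≤ ‖z (d*T) - p - w (d*T)‖ + ‖p - T^k • ζ‖ + ‖w (d*T) - T^k • η‖ := by
          have := norm_add_le (z (d*T) - p - w (d*T)) (p - T^k • ζ)
          linarith
      _ ≤ 2*(L₀+L₁)*(‖ζ‖+C₁) * T^(k+1) + C₁ * T^(k+1) + C₂ * T^(k+1) := by linarith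
      _ ≤ C' * T^(k+1) := by
          rw [hC']
          have : (0:ℝ) < T^(k+1) := by positivity
          nlinarith

lemma reach_sum
    (hf₀lip : ∀ a b, ‖f₀ a - f₀ b‖ ≤ L₀ * ‖a - b‖)
    (hf₁lip : ∀ a b, ‖f₁ a - f₁ b‖ ≤ L₁ * ‖a - b‖)
    (hf₁bdd : ∀ a, ‖f₁ a‖ ≤ M₁) (hL₀ : 0 ≤ L₀) (hL₁ : 0 ≤ L₁)
    {k : ℕ} (hk : 1 ≤ k) {ι : Type*} [DecidableEq ι] (s : Finset ι)
    (ξ : ι → EuclideanSpace ℝ (Fin n)) (lam : ι → ℝ)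
    (hξ : ∀ i, IsTangentVector f₀ f₁ k (ξ i)) (hlam : ∀ i, 0 ≤ lam i)
    (hlam1 : ∀ i, lam i ≤ 1) :
    Reach f₀ f₁ k (∑ i ∈ s, lam i) (∑ i ∈ s, lam i ^ k • ξ i) := by
  induction s using Finset.cons_induction_on with
  | empty => simpa using reach_zero k
  | cons _ _ hnotin ih =>
    rename_i a s'
    rw [Finset.sum_cons, Finset.sum_cons, add_comm (lam a) _,
      add_comm (lam a ^ k • ξ a) _]
    exact reach_append hf₀lip hf₁lip hf₁bdd hL₀ hL₁
      (Finset.sum_nonneg fun i _ => hlam i) (hlam a) (hlam1 a)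
      ih (reach_of_TV hk (hξ a) (hlam a) (hlam1 a))

lemma TV_combo (hf₀0 : f₀ 0 = 0)
    (hf₀lip : ∀ a b, ‖f₀ a - f₀ b‖ ≤ L₀ * ‖a - b‖)
    (hf₁lip : ∀ a b, ‖f₁ a - f₁ b‖ ≤ L₁ * ‖a - b‖)
    (hf₁bdd : ∀ a, ‖f₁ a‖ ≤ M₁) (hL₀ : 0 ≤ L₀) (hL₁ : 0 ≤ L₁)
    {k : ℕ} (hk : 1 ≤ k) {ι : Type*} [DecidableEq ι] (s : Finset ι)
    (ξ : ι → EuclideanSpace ℝ (Fin n)) (lam : ι → ℝ)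
    (hξ : ∀ i, IsTangentVector f₀ f₁ k (ξ i)) (hlam : ∀ i, 0 ≤ lam i)
    (hlam1 : ∀ i, lam i ≤ 1)
    (hsum : (∑ i ∈ s, lam i) ≤ 1) :
    IsTangentVector f₀ f₁ k (∑ i ∈ s, lam i ^ k • ξ i) :=
  TV_of_reach hf₀0 hf₀lip hf₁lip hf₁bdd hL₀ hL₁
    (reach_sum hf₀lip hf₁lip hf₁bdd hL₀ hL₁ hk s ξ lam hξ hlam hlam1)
    (Finset.sum_nonneg fun i _ => hlam i) hsum

lemma TV_mono (hf₀0 : f₀ 0 = 0)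
    (hf₀lip : ∀ a b, ‖f₀ a - f₀ b‖ ≤ L₀ * ‖a - b‖)
    (hf₁lip : ∀ a b, ‖f₁ a - f₁ b‖ ≤ L₁ * ‖a - b‖)
    (hf₁bdd : ∀ a, ‖f₁ a‖ ≤ M₁) (hL₀ : 0 ≤ L₀) (hL₁ : 0 ≤ L₁)
    {k l : ℕ} (hk : 1 ≤ k) (hkl : k ≤ l) {ξ : EuclideanSpace ℝ (Fin n)}
    (h : IsTangentVector f₀ f₁ k ξ) : IsTangentVector f₀ f₁ l ξ := by
  obtain ⟨u, C, T₀, hT₀, hC, hu⟩ := h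
  have hkpos : (0:ℝ) < k := by exact_mod_cast hk
  have hlk : (1:ℝ) ≤ (l:ℝ)/(k:ℝ) := by
    rw [le_div_iff₀ hkpos]
    exact_mod_cast by linarith [hkl]
  refine ⟨fun T t => if t < T - T ^ ((l:ℝ)/(k:ℝ)) then 0
      else u (T ^ ((l:ℝ)/(k:ℝ))) (t - (T - T ^ ((l:ℝ)/(k:ℝ)))), C, min T₀ 1,
    lt_min hT₀ one_pos, hC, ?_⟩
  intro T hT
  have hTpos : 0 < T := hT.1
  have hT1 : T ≤ 1 := le_trans hT.2 (min_le_right _ _)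
  set T' : ℝ := T ^ ((l:ℝ)/(k:ℝ)) with hT'def
  have hT'pos : 0 < T' := Real.rpow_pos_of_pos hTpos _
  have hT'le : T' ≤ T := by
    calc T' = T ^ ((l:ℝ)/(k:ℝ)) := rfl
      _ ≤ T ^ (1:ℝ) := Real.rpow_le_rpow_of_exponent_ge hTpos hT1 hlk
      _ = T := Real.rpow_one T
  have hT'mem : T' ∈ Ioc (0:ℝ) T₀ :=
    ⟨hT'pos, le_trans hT'le (le_trans hT.2 (min_le_left _ _))⟩
  obtain ⟨hII, hint, y₂, hy₂c, hy₂eq, hy₂end⟩ := hu T' hT'mem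
  have ha : 0 ≤ T - T' := by linarith
  have hzero : ∀ t ∈ Icc (0:ℝ) (T - T'),
      (0 : EuclideanSpace ℝ (Fin n)) = ∫ s in (0:ℝ)..t,
        (f₀ ((fun _ => (0:EuclideanSpace ℝ (Fin n))) s)
          + (fun _ => (0:ℝ)) s • f₁ ((fun _ => (0:EuclideanSpace ℝ (Fin n))) s)) := by
    intro t ht
    simp [hf₀0]
  obtain ⟨z, hwII, hwint, hzc, hzeq, hzend⟩ :=
    glue hf₀lip hf₁lip hf₁bdd hL₀ hL₁ ha hT'pos.le
      (intervalIntegrable_const (c := (0:ℝ))) hII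
      (continuousOn_const (c := (0:EuclideanSpace ℝ (Fin n)))) (fun t ht => hzero t ht)
      hy₂c (fun t ht => by rw [hy₂eq t ht]; simp)
  have hab : T - T' + T' = T := by ring
  rw [hab] at hwII hwint hzc hzeq hzend
  refine ⟨hwII, ?_, z, hzc, hzeq, ?_⟩
  · rw [hwint]
    simpa using le_trans hint hT'le
  · rw [hzend]
    -- T'^k = T^l and T'^(k+1) ≤ T^(l+1)
    have hTk : T' ^ k = T ^ l := by
      rw [hT'def, ← Real.rpow_natCast (T ^ ((l:ℝ)/(k:ℝ))) k, ← Real.rpow_mul hTpos.le]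
      rw [div_mul_cancel₀ _ (ne_of_gt hkpos)]
      exact Real.rpow_natCast T l
    have hTk1 : T' ^ (k+1) ≤ T ^ (l+1) := by
      have hexp : ((l:ℝ)/(k:ℝ)) * (((k+1) : ℕ) : ℝ) = (l:ℝ) + (l:ℝ)/(k:ℝ) := by
        field_simp
        push_cast
        ring
      have h1 : T' ^ (k+1) = T ^ ((l:ℝ) + (l:ℝ)/(k:ℝ)) := by
        rw [hT'def, ← Real.rpow_natCast (T ^ ((l:ℝ)/(k:ℝ))) (k+1), ← Real.rpow_mul hTpos.le,
          hexp]
      have h2 : ((l:ℝ)+1) ≤ (l:ℝ) + (l:ℝ)/(k:ℝ) := by linarith [hlk]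
      have h3 : T ^ ((l:ℝ) + (l:ℝ)/(k:ℝ)) ≤ T ^ (((l:ℝ)+1)) :=
        Real.rpow_le_rpow_of_exponent_ge hTpos hT1 h2
      have h4 : T ^ (((l:ℝ)+1)) = T ^ (l+1) := by
        rw [show ((l:ℝ)+1) = ((l+1 : ℕ):ℝ) by push_cast; ring, Real.rpow_natCast]
      rw [h1, ← h4]
      exact h3
    calc ‖y₂ T' - T ^ l • ξ‖ = ‖y₂ T' - T' ^ k • ξ‖ := by rw [hTk]
      _ ≤ C * T' ^ (k+1) := hy₂end
      _ ≤ C * T ^ (l+1) := mul_le_mul_of_nonneg_left hTk1 hC.le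



noncomputable def crossFam (n : ℕ) (r : ℝ) : Fin n ⊕ Fin n → EuclideanSpace ℝ (Fin n) :=
  Sum.elim (fun i => r • EuclideanSpace.single i 1) (fun i => -(r • EuclideanSpace.single i 1))

lemma abs_coord_le_norm (x : EuclideanSpace ℝ (Fin n)) (i : Fin n) : |x i| ≤ ‖x‖ := by
  have h : ‖x i‖^2 ≤ ∑ j, ‖x j‖^2 :=
    Finset.single_le_sum (fun j _ => sq_nonneg ‖x j‖) (Finset.mem_univ i)
  calc |x i| = Real.sqrt (‖x i‖^2) := by rw [Real.norm_eq_abs, Real.sqrt_sq_eq_abs, abs_abs]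
    _ ≤ Real.sqrt (∑ j, ‖x j‖^2) := Real.sqrt_le_sqrt h
    _ = ‖x‖ := (EuclideanSpace.norm_eq x).symm

lemma sum_coord_smul_single (x : EuclideanSpace ℝ (Fin n)) :
    (∑ i, x i • EuclideanSpace.single i (1:ℝ)) = x := by
  have := (EuclideanSpace.basisFun (Fin n) ℝ).sum_repr x
  simpa [EuclideanSpace.basisFun_apply, EuclideanSpace.basisFun_repr] using this

lemma hull_range_subset {N : ℕ} (ξ : Fin N → EuclideanSpace ℝ (Fin n)) :
    convexHull ℝ (Set.range ξ) ⊆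
      {x | ∃ c : Fin N → ℝ, (∀ i, 0 ≤ c i) ∧ (∑ i, c i) = 1 ∧ (∑ i, c i • ξ i) = x} := by
  apply convexHull_min
  · rintro x ⟨j, rfl⟩
    exact ⟨Pi.single j 1, fun i => by by_cases h : i = j <;> simp [h, Pi.single_apply],
      by simp [Pi.single_apply], by simp [Pi.single_apply]⟩
  · rintro x ⟨cx, hcx0, hcx1, hcxs⟩ y ⟨cy, hcy0, hcy1, hcys⟩ a b ha hb hab
    refine ⟨fun i => a * cx i + b * cy i,
      fun i => add_nonneg (mul_nonneg ha (hcx0 i)) (mul_nonneg hb (hcy0 i)), ?_, ?_⟩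
    · simp only [Finset.sum_add_distrib, ← Finset.mul_sum, hcx1, hcy1]; linarith
    · simp only [add_smul, mul_smul, Finset.sum_add_distrib, ← Finset.smul_sum, hcxs, hcys]

lemma mem_hull_crossFam (hn : 0 < n) {r : ℝ} (hr : 0 < r) {x : EuclideanSpace ℝ (Fin n)}
    (hx : ‖x‖ < r / (n + 1)) : x ∈ convexHull ℝ (Set.range (crossFam n r)) := by
  set s : ℝ := (1 - (∑ j, |x j|) / r) / (2 * n) with hs
  set w : Fin n ⊕ Fin n → ℝ :=
    Sum.elim (fun i => (|x i| + x i) / (2*r) + s) (fun i => (|x i| - x i) / (2*r) + s) with hw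
  have hsum_abs : (∑ j, |x j|) ≤ (n : ℝ) * ‖x‖ := by
    calc (∑ j, |x j|) ≤ ∑ _j : Fin n, ‖x‖ :=
          Finset.sum_le_sum fun j _ => abs_coord_le_norm x j
      _ = (n : ℝ) * ‖x‖ := by simp [mul_comm]
  have hxr : (∑ j, |x j|) ≤ r := by
    have h2 : (n:ℝ) * ‖x‖ ≤ (n:ℝ) * (r / (n+1)) :=
      mul_le_mul_of_nonneg_left hx.le (Nat.cast_nonneg n)
    have h3 : (n:ℝ) * (r / (n+1)) ≤ r := by
      rw [mul_div_assoc']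
      rw [div_le_iff₀ (by positivity)]
      nlinarith [Nat.cast_nonneg (α := ℝ) n]
    linarith
  have hspos : 0 ≤ s := by
    have := div_le_one_of_le₀ hxr hr.le
    have h2n : (0:ℝ) < 2 * n := by positivity
    apply div_nonneg (by linarith) h2n.le
  have hw0 : ∀ i, 0 ≤ w i := by
    rintro (i | i) <;> simp only [hw, Sum.elim_inl, Sum.elim_inr] <;>
      apply add_nonneg _ hspos <;> apply div_nonneg _ (by positivity)
    · cases abs_cases (x i) with
      | inl h => linarith [h.1]
      | inr h => linarith [abs_nonneg (x i), h.1]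
    · cases abs_cases (x i) with
      | inl h => linarith [h.1]
      | inr h => linarith [h.1]
  have hwsum : (∑ i, w i) = 1 := by
    rw [Fintype.sum_sum_type]
    simp only [hw, Sum.elim_inl, Sum.elim_inr, Finset.sum_add_distrib]
    have h1 : (∑ j, (|x j| + x j) / (2*r)) + (∑ j, (|x j| - x j) / (2*r))
        = (∑ j, |x j|) / r := by
      rw [← Finset.sum_add_distrib, Finset.sum_div]
      refine Finset.sum_congr rfl fun j _ => ?_
      field_simp; ring
    have h2 : (∑ _j : Fin n, s) = (n:ℝ) * s := by simp [mul_comm]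
    have h3 : (n:ℝ) * s + (n:ℝ) * s = 1 - (∑ j, |x j|) / r := by
      rw [hs]; field_simp; ring
    rw [h2]; linarith [h1, h3]
  have hcomb : (∑ i, w i • crossFam n r i) = x := by
    rw [Fintype.sum_sum_type]
    simp only [crossFam, Sum.elim_inl, Sum.elim_inr, hw]
    have : ∀ i : Fin n,
        ((|x i| + x i) / (2*r) + s) • (r • EuclideanSpace.single i (1:ℝ))
        + ((|x i| - x i) / (2*r) + s) • (-(r • EuclideanSpace.single i (1:ℝ)))
        = x i • EuclideanSpace.single i (1:ℝ) := by
      intro i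
      rw [smul_neg, smul_smul, smul_smul, ← sub_eq_add_neg, ← sub_smul]
      congr 1
      field_simp; ring
    rw [← Finset.sum_add_distrib]
    rw [Finset.sum_congr rfl fun i _ => this i]
    exact sum_coord_smul_single x
  have := Finset.centerMass_mem_convexHull (Finset.univ : Finset (Fin n ⊕ Fin n))
    (fun i _ => hw0 i) (by rw [hwsum]; norm_num)
    (fun i _ => Set.mem_range_self (f := crossFam n r) i)
  rwa [Finset.centerMass, hwsum, inv_one, one_smul, hcomb] at this

lemma zero_mem_interior_hull_crossFam (hn : 0 < n) {r : ℝ} (hr : 0 < r) :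
    (0:EuclideanSpace ℝ (Fin n)) ∈ interior (convexHull ℝ (Set.range (crossFam n r))) := by
  rw [mem_interior]
  refine ⟨Metric.ball 0 (r / (n+1)), ?_, Metric.isOpen_ball, ?_⟩
  · intro x hx
    exact mem_hull_crossFam hn hr (by simpa using hx)
  · simp [Metric.mem_ball, div_pos hr]
    positivity

lemma abs_coord_le_norm' (x : EuclideanSpace ℝ (Fin n)) (i : Fin n) : |x i| ≤ ‖x‖ := by
  have h : ‖x i‖^2 ≤ ∑ j, ‖x j‖^2 :=
    Finset.single_le_sum (fun j _ => sq_nonneg ‖x j‖) (Finset.mem_univ i)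
  calc |x i| = Real.sqrt (‖x i‖^2) := by rw [Real.norm_eq_abs, Real.sqrt_sq_eq_abs, abs_abs]
    _ ≤ Real.sqrt (∑ j, ‖x j‖^2) := Real.sqrt_le_sqrt h
    _ = ‖x‖ := (EuclideanSpace.norm_eq x).symm

lemma sum_coord_smul_single' (x : EuclideanSpace ℝ (Fin n)) :
    (∑ i, x i • EuclideanSpace.single i (1:ℝ)) = x := by
  have := (EuclideanSpace.basisFun (Fin n) ℝ).sum_repr x
  simpa [EuclideanSpace.basisFun_apply, EuclideanSpace.basisFun_repr] using this

lemma rpow_pow_cancel {q : ℝ} (hq : 0 ≤ q) {k : ℕ} (hk : 1 ≤ k) :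
    (q ^ ((1:ℝ)/(k:ℝ))) ^ k = q := by
  have hkpos : (0:ℝ) < k := by exact_mod_cast hk
  rw [← Real.rpow_natCast (q ^ ((1:ℝ)/(k:ℝ))) k, ← Real.rpow_mul hq, one_div,
    inv_mul_cancel₀ (ne_of_gt hkpos), Real.rpow_one]

lemma pow_rpow_cancel {q : ℝ} (hq : 0 ≤ q) {k : ℕ} (hk : 1 ≤ k) :
    ((q ^ k) : ℝ) ^ ((1:ℝ)/(k:ℝ)) = q := by
  have hkpos : (0:ℝ) < k := by exact_mod_cast hk
  rw [← Real.rpow_natCast q k, ← Real.rpow_mul hq, mul_one_div,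
    div_self (ne_of_gt hkpos), Real.rpow_one]

lemma imp31 (hn : 1 ≤ n) (hf₀0 : f₀ 0 = 0)
    (hf₀lip : ∀ a b, ‖f₀ a - f₀ b‖ ≤ L₀ * ‖a - b‖)
    (hf₁lip : ∀ a b, ‖f₁ a - f₁ b‖ ≤ L₁ * ‖a - b‖)
    (hf₁bdd : ∀ a, ‖f₁ a‖ ≤ M₁) (hL₀ : 0 ≤ L₀) (hL₁ : 0 ≤ L₁)
    (h : ∃ k, 1 ≤ k ∧ ∃ r > (0:ℝ), ∀ i : Fin n,
        IsTangentVector f₀ f₁ k (r • EuclideanSpace.single i 1) ∧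
        IsTangentVector f₀ f₁ k (-(r • EuclideanSpace.single i 1))) :
    (0:EuclideanSpace ℝ (Fin n)) ∈ interior (KInf f₀ f₁) := by
  classical
  obtain ⟨k, hk, r, hr, hTV⟩ := h
  set δ : ℝ := r / (2*n)^k with hδ
  have h2n : (1:ℝ) ≤ 2*n := by
    have : (1:ℝ) ≤ (n:ℝ) := by exact_mod_cast hn
    linarith
  have h2npos : (0:ℝ) < 2*n := by linarith
  have hδpos : 0 < δ := by
    apply div_pos hr
    positivity
  rw [mem_interior]
  refine ⟨Metric.ball 0 δ, ?_, Metric.isOpen_ball, Metric.mem_ball_self hδpos⟩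
  intro x hx
  rw [Metric.mem_ball, dist_zero_right] at hx
  set lam : Fin n → ℝ := fun j => (|x j|/r) ^ ((1:ℝ)/(k:ℝ)) with hlam
  set v : Fin n → EuclideanSpace ℝ (Fin n) := fun j =>
    if 0 ≤ x j then r • EuclideanSpace.single j 1 else -(r • EuclideanSpace.single j 1) with hv
  have hlam0 : ∀ j, 0 ≤ lam j := fun j => Real.rpow_nonneg (by positivity) _
  have hcoord : ∀ j, |x j| / r ≤ (1/(2*(n:ℝ)))^k := by
    intro j
    have h1 : |x j| ≤ ‖x‖ := abs_coord_le_norm' x j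
    have h2 : |x j| < δ := lt_of_le_of_lt h1 hx
    rw [hδ, div_eq_mul_inv] at h2
    rw [div_le_iff₀ hr, one_div, inv_pow]
    calc |x j| ≤ r * ((2*(n:ℝ))^k)⁻¹ := by
          have hp : (0:ℝ) < (2*(n:ℝ))^k := by positivity
          nlinarith [h2]
      _ = ((2*(n:ℝ))^k)⁻¹ * r := by ring
  have hlamle : ∀ j, lam j ≤ 1/(2*(n:ℝ)) := by
    intro j
    have h1 : lam j ≤ ((1/(2*(n:ℝ)))^k) ^ ((1:ℝ)/(k:ℝ)) :=
      Real.rpow_le_rpow (by positivity) (hcoord j) (by positivity)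
    calc lam j ≤ ((1/(2*(n:ℝ)))^k) ^ ((1:ℝ)/(k:ℝ)) := h1
      _ = 1/(2*(n:ℝ)) := pow_rpow_cancel (by positivity) hk
  have hlam1 : ∀ j, lam j ≤ 1 := by
    intro j
    calc lam j ≤ 1/(2*(n:ℝ)) := hlamle j
      _ ≤ 1 := by rw [div_le_one h2npos]; linarith
  have hsum : (∑ j, lam j) ≤ 1 := by
    calc (∑ j, lam j) ≤ ∑ _j : Fin n, 1/(2*(n:ℝ)) := Finset.sum_le_sum fun j _ => hlamle j
      _ = (n:ℝ) * (1/(2*(n:ℝ))) := by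
          rw [Finset.sum_const, Finset.card_univ, Fintype.card_fin, nsmul_eq_mul]
      _ ≤ 1 := by
          rw [mul_one_div, div_le_one h2npos]
          linarith [Nat.cast_nonneg (α := ℝ) n]
  have hTVv : ∀ j, IsTangentVector f₀ f₁ k (v j) := by
    intro j
    rw [hv]
    by_cases hsign : 0 ≤ x j
    · simpa [hsign] using (hTV j).1
    · simpa [hsign] using (hTV j).2
  have hcombo := TV_combo hf₀0 hf₀lip hf₁lip hf₁bdd hL₀ hL₁ hk Finset.univ v lam
    hTVv hlam0 hlam1 hsum
  have heq : (∑ j, lam j ^ k • v j) = x := by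
    have hterm : ∀ j : Fin n, lam j ^ k • v j = x j • EuclideanSpace.single j 1 := by
      intro j
      have hlamk : lam j ^ k = |x j| / r := rpow_pow_cancel (by positivity) hk
      rw [hlamk]
      simp only [hv]
      by_cases hsign : 0 ≤ x j
      · rw [if_pos hsign, smul_smul, abs_of_nonneg hsign, div_mul_cancel₀ _ (ne_of_gt hr)]
      · rw [if_neg hsign, smul_neg, smul_smul, abs_of_neg (not_le.1 hsign)]
        rw [show -(x j) / r * r = -(x j) by field_simp, neg_smul, neg_neg]
    rw [Finset.sum_congr rfl fun j _ => hterm j]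
    exact sum_coord_smul_single' x
  rw [heq] at hcombo
  exact ⟨k, hk, hcombo⟩

lemma imp12 (hn : 1 ≤ n)
    (h : (0:EuclideanSpace ℝ (Fin n)) ∈ interior (KInf f₀ f₁)) :
    ∃ (N : ℕ) (ξ : Fin N → EuclideanSpace ℝ (Fin n)),
      (∀ i, ξ i ∈ KInf f₀ f₁) ∧
      0 ∈ interior (convexHull ℝ (Set.range ξ)) := by
  rw [mem_interior_iff_mem_nhds, Metric.mem_nhds_iff] at h
  obtain ⟨ε, hε, hball⟩ := h
  set r : ℝ := ε/2 with hrdef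
  have hr : 0 < r := by positivity
  refine ⟨n + n, fun i => crossFam n r (finSumFinEquiv.symm i), ?_, ?_⟩
  · intro i
    apply hball
    have hnorm : ∀ j : Fin n, ‖r • EuclideanSpace.single j (1:ℝ)‖ = r := by
      intro j
      rw [norm_smul, Real.norm_eq_abs, abs_of_pos hr, EuclideanSpace.norm_single,
        norm_one, mul_one]
    have hcf : ∀ s : Fin n ⊕ Fin n, ‖crossFam n r s‖ < ε := by
      intro s
      cases s with
      | inl j =>
        simp only [crossFam, Sum.elim_inl]
        rw [hnorm j, hrdef]; linarith
      | inr j =>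
        simp only [crossFam, Sum.elim_inr, norm_neg]
        rw [hnorm j, hrdef]; linarith
    rw [Metric.mem_ball, dist_zero_right]
    exact hcf _
  · have hrange : Set.range (fun i => crossFam n r (finSumFinEquiv.symm i))
        = Set.range (crossFam n r) :=
      Function.Surjective.range_comp (Equiv.surjective _) (crossFam n r)
    rw [hrange]
    exact zero_mem_interior_hull_crossFam hn hr

lemma imp23 (hn : 1 ≤ n) (hf₀0 : f₀ 0 = 0)
    (hf₀lip : ∀ a b, ‖f₀ a - f₀ b‖ ≤ L₀ * ‖a - b‖)
    (hf₁lip : ∀ a b, ‖f₁ a - f₁ b‖ ≤ L₁ * ‖a - b‖)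
    (hf₁bdd : ∀ a, ‖f₁ a‖ ≤ M₁) (hL₀ : 0 ≤ L₀) (hL₁ : 0 ≤ L₁)
    (h : ∃ (N : ℕ) (ξ : Fin N → EuclideanSpace ℝ (Fin n)),
      (∀ i, ξ i ∈ KInf f₀ f₁) ∧
      0 ∈ interior (convexHull ℝ (Set.range ξ))) :
    ∃ k, 1 ≤ k ∧ ∃ r > (0:ℝ), ∀ i : Fin n,
        IsTangentVector f₀ f₁ k (r • EuclideanSpace.single i 1) ∧
        IsTangentVector f₀ f₁ k (-(r • EuclideanSpace.single i 1)) := by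
  classical
  obtain ⟨N, ξ, hξK, hint⟩ := h
  have hNpos : 0 < N := by
    by_contra hN
    push_neg at hN
    interval_cases N
    have h0 : (0:EuclideanSpace ℝ (Fin n)) ∈ convexHull ℝ (Set.range ξ) :=
      interior_subset hint
    rw [Set.range_eq_empty, convexHull_empty] at h0
    exact h0
  have hN1 : (1:ℝ) ≤ (N:ℝ) := by exact_mod_cast hNpos
  -- choose orders
  choose κ hκ1 hκTV using hξK
  set k : ℕ := (Finset.univ.sup κ) ⊔ 1 with hkdef
  have hk : 1 ≤ k := le_sup_right
  have hTVk : ∀ i, IsTangentVector f₀ f₁ k (ξ i) := by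
    intro i
    exact TV_mono hf₀0 hf₀lip hf₁lip hf₁bdd hL₀ hL₁ (hκ1 i)
      (le_trans (Finset.le_sup (Finset.mem_univ i)) le_sup_left) (hκTV i)
  -- small ball inside the hull
  rw [mem_interior_iff_mem_nhds, Metric.mem_nhds_iff] at hint
  obtain ⟨ε, hε, hball⟩ := hint
  set ρ : ℝ := ε/2 with hρdef
  have hρ : 0 < ρ := by positivity
  have hNk : (0:ℝ) < (N:ℝ)^k := by positivity
  -- key: anything in the small ball, scaled by N^{-k}, is a tangent vector of order k
  have key : ∀ w : EuclideanSpace ℝ (Fin n), ‖w‖ < ε →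
      IsTangentVector f₀ f₁ k (((N:ℝ)^k)⁻¹ • w) := by
    intro w hw
    have hwm : w ∈ convexHull ℝ (Set.range ξ) := by
      apply hball
      rw [Metric.mem_ball, dist_zero_right]
      exact hw
    obtain ⟨c, hc0, hc1, hcs⟩ := hull_range_subset ξ hwm
    have hcle1 : ∀ i, c i ≤ 1 := by
      intro i
      calc c i ≤ ∑ j, c j := Finset.single_le_sum (fun j _ => hc0 j) (Finset.mem_univ i)
        _ = 1 := hc1
    set lam : Fin N → ℝ := fun i => (c i) ^ ((1:ℝ)/(k:ℝ)) / N with hlam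
    have hlam0 : ∀ i, 0 ≤ lam i := fun i =>
      div_nonneg (Real.rpow_nonneg (hc0 i) _) (by positivity)
    have hlamle : ∀ i, lam i ≤ 1/(N:ℝ) := by
      intro i
      have h1 : (c i) ^ ((1:ℝ)/(k:ℝ)) ≤ 1 := Real.rpow_le_one (hc0 i) (hcle1 i) (by positivity)
      calc lam i = (c i) ^ ((1:ℝ)/(k:ℝ)) / N := rfl
        _ ≤ 1 / (N:ℝ) := by gcongr
    have hlam1 : ∀ i, lam i ≤ 1 := by
      intro i
      calc lam i ≤ 1/(N:ℝ) := hlamle i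
        _ ≤ 1 := by rw [div_le_one (by positivity)]; exact hN1
    have hsum : (∑ i, lam i) ≤ 1 := by
      calc (∑ i, lam i) ≤ ∑ _i : Fin N, 1/(N:ℝ) := Finset.sum_le_sum fun i _ => hlamle i
        _ = (N:ℝ) * (1/(N:ℝ)) := by
            rw [Finset.sum_const, Finset.card_univ, Fintype.card_fin, nsmul_eq_mul]
        _ = 1 := by field_simp
    have hcombo := TV_combo hf₀0 hf₀lip hf₁lip hf₁bdd hL₀ hL₁ hk Finset.univ ξ lam
      hTVk hlam0 hlam1 hsum
    have heq : (∑ i, lam i ^ k • ξ i) = ((N:ℝ)^k)⁻¹ • w := by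
      have hterm : ∀ i : Fin N, lam i ^ k • ξ i = ((N:ℝ)^k)⁻¹ • (c i • ξ i) := by
        intro i
        rw [smul_smul]
        congr 1
        rw [hlam]
        calc ((c i) ^ ((1:ℝ)/(k:ℝ)) / N) ^ k = ((c i) ^ ((1:ℝ)/(k:ℝ)))^k / (N:ℝ)^k :=
            div_pow _ _ k
          _ = c i / (N:ℝ)^k := by rw [rpow_pow_cancel (hc0 i) hk]
          _ = ((N:ℝ)^k)⁻¹ * c i := by rw [div_eq_inv_mul]
      rw [Finset.sum_congr rfl fun i _ => hterm i, ← Finset.smul_sum, hcs]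
    rw [heq] at hcombo
    exact hcombo
  refine ⟨k, hk, ρ/(N:ℝ)^k, by positivity, ?_⟩
  intro j
  have hnorm : ‖ρ • EuclideanSpace.single j (1:ℝ)‖ = ρ := by
    rw [norm_smul, Real.norm_eq_abs, abs_of_pos hρ, EuclideanSpace.norm_single,
      norm_one, mul_one]
  constructor
  · have := key (ρ • EuclideanSpace.single j 1) (by rw [hnorm]; linarith)
    rw [smul_smul, inv_mul_eq_div] at this
    exact this
  · have := key (-(ρ • EuclideanSpace.single j 1)) (by rw [norm_neg, hnorm]; linarith)
    rw [smul_neg, smul_smul, inv_mul_eq_div] at this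
    exact this


/-- **Equivalent formulations of the tangent-cone condition**:
`0 ∈ int K_∞` ⟺ `0` lies in the interior of the convex hull of finitely many tangent
vectors ⟺ there are `k ≥ 1` and `r > 0` with `± r e₁, …, ± r e_n ∈ K_k`. -/
theorem tangentVectors_interior_equiv (n : ℕ) (hn : 1 ≤ n)
    (f₀ f₁ : EuclideanSpace ℝ (Fin n) → EuclideanSpace ℝ (Fin n))
    (L₀ L₁ M₀ M₁ : ℝ)
    (hf₀lip : ∀ a b, ‖f₀ a - f₀ b‖ ≤ L₀ * ‖a - b‖)
    (hf₁lip : ∀ a b, ‖f₁ a - f₁ b‖ ≤ L₁ * ‖a - b‖)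
    (hf₀bdd : ∀ a, ‖f₀ a‖ ≤ M₀) (hf₁bdd : ∀ a, ‖f₁ a‖ ≤ M₁)
    (hf₀0 : f₀ 0 = 0) :
    ((0 ∈ interior (KInf f₀ f₁)) ↔
      (∃ (N : ℕ) (ξ : Fin N → EuclideanSpace ℝ (Fin n)),
        (∀ i, ξ i ∈ KInf f₀ f₁) ∧
        0 ∈ interior (convexHull ℝ (Set.range ξ)))) ∧
    ((∃ (N : ℕ) (ξ : Fin N → EuclideanSpace ℝ (Fin n)),
        (∀ i, ξ i ∈ KInf f₀ f₁) ∧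
        0 ∈ interior (convexHull ℝ (Set.range ξ))) ↔
      (∃ k, 1 ≤ k ∧ ∃ r > (0:ℝ), ∀ i : Fin n,
        IsTangentVector f₀ f₁ k (r • EuclideanSpace.single i 1) ∧
        IsTangentVector f₀ f₁ k (-(r • EuclideanSpace.single i 1)))) := by
  have hsn : ‖(EuclideanSpace.single (⟨0, hn⟩ : Fin n) (1:ℝ) :
      EuclideanSpace ℝ (Fin n))‖ = 1 := by
    rw [EuclideanSpace.norm_single, norm_one]
  have hL₀ : 0 ≤ L₀ := by
    have h := hf₀lip (EuclideanSpace.single ⟨0, hn⟩ 1) 0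
    rw [sub_zero, hsn, mul_one] at h
    linarith [norm_nonneg (f₀ (EuclideanSpace.single (⟨0, hn⟩ : Fin n) 1) - f₀ 0)]
  have hL₁ : 0 ≤ L₁ := by
    have h := hf₁lip (EuclideanSpace.single ⟨0, hn⟩ 1) 0
    rw [sub_zero, hsn, mul_one] at h
    linarith [norm_nonneg (f₁ (EuclideanSpace.single (⟨0, hn⟩ : Fin n) 1) - f₁ 0)]
  have i12 := fun h => imp12 (f₀ := f₀) (f₁ := f₁) hn h
  have i23 := fun h => imp23 hn hf₀0 hf₀lip hf₁lip hf₁bdd hL₀ hL₁ h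
  have i31 := fun h => imp31 hn hf₀0 hf₀lip hf₁lip hf₁bdd hL₀ hL₁ h
  exact ⟨⟨i12, fun h2 => i31 (i23 h2)⟩, ⟨i23, fun h3 => i12 (i31 h3)⟩⟩
end

section
/- For the system $\dot y_1 = u$, $\dot y_2 = y_1^{2p+1}$, $\dot y_3 = y_2$, $\dot y_4 = y_1^{2p+2}$ on $\mathbb{R}^4$ with $p \in \mathbb{N}$, starting from the origin, for any $T > 0$ and any control $u \in L^1((0,T);\mathbb{R})$ the final state satisfies $|y_3(T)|^{2p+2} \le T^{2p+3} |y_4(T)|^{2p+1}$. -/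
open MeasureTheory Set

/-- **Hölder obstruction estimate** for the system `y₁' = u`, `y₂' = y₁^{2p+1}`,
`y₃' = y₂`, `y₄' = y₁^{2p+2}` started at the origin:
`|y₃(T)|^{2p+2} ≤ T^{2p+3} |y₄(T)|^{2p+1}`. -/
theorem holder_obstruction (p : ℕ) (T : ℝ) (hT : 0 < T) (u : ℝ → ℝ)
    (hu : IntervalIntegrable u volume 0 T)
    (y₁ y₂ y₃ y₄ : ℝ → ℝ)
    (hy₁ : ∀ t ∈ Set.Icc 0 T, y₁ t = ∫ s in (0:ℝ)..t, u s)
    (hy₂ : ∀ t ∈ Set.Icc 0 T, y₂ t = ∫ s in (0:ℝ)..t, (y₁ s) ^ (2 * p + 1))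
    (hy₃ : ∀ t ∈ Set.Icc 0 T, y₃ t = ∫ s in (0:ℝ)..t, y₂ s)
    (hy₄ : ∀ t ∈ Set.Icc 0 T, y₄ t = ∫ s in (0:ℝ)..t, (y₁ s) ^ (2 * p + 2)) :
    |y₃ T| ^ (2 * p + 2) ≤ T ^ (2 * p + 3) * |y₄ T| ^ (2 * p + 1) := by
  have h0T : (0:ℝ) ≤ T := hT.le
  have huIcc : uIcc (0:ℝ) T = Icc 0 T := uIcc_of_le h0T
  -- y₁ is continuous on [0, T]
  have hy₁cont : ContinuousOn y₁ (Icc 0 T) := by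
    have := intervalIntegral.continuousOn_primitive_interval' hu
      (left_mem_uIcc (a := (0:ℝ)) (b := T))
    rw [huIcc] at this
    exact this.congr hy₁
  -- auxiliary quantities
  set A : ℝ := ∫ s in Ioc (0:ℝ) T, |y₁ s| ^ (2 * p + 1) with hA
  set B : ℝ := ∫ s in Ioc (0:ℝ) T, |y₁ s| ^ (2 * p + 2) with hB
  have habscont : ContinuousOn (fun s => |y₁ s|) (Icc 0 T) := hy₁cont.abs
  have hAint : IntegrableOn (fun s => |y₁ s| ^ (2 * p + 1)) (Icc 0 T) :=
    ((habscont.pow _).integrableOn_compact isCompact_Icc)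
  have hBint : IntegrableOn (fun s => |y₁ s| ^ (2 * p + 2)) (Icc 0 T) :=
    ((habscont.pow _).integrableOn_compact isCompact_Icc)
  have hAnonneg : 0 ≤ A := by
    apply setIntegral_nonneg measurableSet_Ioc
    intro s _; positivity
  -- Step 1: |y₂ t| ≤ A for t ∈ [0, T]
  have hy₂bound : ∀ t ∈ Icc (0:ℝ) T, |y₂ t| ≤ A := by
    intro t ht
    rw [hy₂ t ht]
    have h1 : |∫ s in (0:ℝ)..t, (y₁ s) ^ (2 * p + 1)|
        ≤ ∫ s in (0:ℝ)..t, |(y₁ s) ^ (2 * p + 1)| :=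
      intervalIntegral.abs_integral_le_integral_abs ht.1
    have h2 : (∫ s in (0:ℝ)..t, |(y₁ s) ^ (2 * p + 1)|)
        = ∫ s in (0:ℝ)..t, |y₁ s| ^ (2 * p + 1) := by
      simp [abs_pow]
    have h3 : (∫ s in (0:ℝ)..t, |y₁ s| ^ (2 * p + 1))
        ≤ ∫ s in (0:ℝ)..T, |y₁ s| ^ (2 * p + 1) := by
      apply intervalIntegral.integral_mono_interval (a := (0:ℝ)) le_rfl ht.1 ht.2
      · filter_upwards with s; positivity
      · rw [intervalIntegrable_iff_integrableOn_Ioc_of_le h0T]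
        exact hAint.mono_set Ioc_subset_Icc_self
    have h4 : (∫ s in (0:ℝ)..T, |y₁ s| ^ (2 * p + 1)) = A := by
      rw [hA, intervalIntegral.integral_of_le h0T]
    calc |∫ s in (0:ℝ)..t, (y₁ s) ^ (2 * p + 1)|
        ≤ ∫ s in (0:ℝ)..t, |(y₁ s) ^ (2 * p + 1)| := h1
      _ = ∫ s in (0:ℝ)..t, |y₁ s| ^ (2 * p + 1) := h2
      _ ≤ ∫ s in (0:ℝ)..T, |y₁ s| ^ (2 * p + 1) := h3
      _ = A := h4
  -- Step 2: |y₃ T| ≤ T * A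
  have hy₃bound : |y₃ T| ≤ A * T := by
    rw [hy₃ T ⟨h0T, le_rfl⟩]
    have := intervalIntegral.norm_integral_le_of_norm_le_const
      (C := A) (f := y₂) (a := (0:ℝ)) (b := T) ?_
    · simpa [abs_of_nonneg h0T] using this
    · intro s hs
      rw [uIoc_of_le h0T] at hs
      exact hy₂bound s (Ioc_subset_Icc_self hs)
  -- Step 3 (Hölder): A ^ (2p+2) ≤ B ^ (2p+1) * T
  have hfin : IsFiniteMeasure (volume.restrict (Ioc (0:ℝ) T)) := by
    constructor
    rw [Measure.restrict_apply_univ, Real.volume_Ioc]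
    exact ENNReal.ofReal_lt_top
  have hmeas : AEStronglyMeasurable (fun s => |y₁ s| ^ (2 * p + 1))
      (volume.restrict (Ioc (0:ℝ) T)) :=
    ((habscont.pow _).mono Ioc_subset_Icc_self).aestronglyMeasurable measurableSet_Ioc
  have hmemf : MemLp (fun s => |y₁ s| ^ (2 * p + 1))
      (ENNReal.ofReal ((2 * (p:ℝ) + 2) / (2 * p + 1))) (volume.restrict (Ioc (0:ℝ) T)) := by
    obtain ⟨C, hC⟩ := (isCompact_Icc.bddAbove_image
      ((habscont.pow (2 * p + 1)).mono (le_refl _))).imp (fun C hC => hC)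
    refine MemLp.of_bound hmeas C ?_
    rw [ae_restrict_iff' measurableSet_Ioc]
    filter_upwards with s hs
    have : |y₁ s| ^ (2 * p + 1) ≤ C :=
      hC (mem_image_of_mem _ (Ioc_subset_Icc_self hs))
    rw [Real.norm_eq_abs, abs_of_nonneg (by positivity)]
    exact this
  have hmemg : MemLp (fun _ : ℝ => (1:ℝ)) (ENNReal.ofReal (2 * (p:ℝ) + 2))
      (volume.restrict (Ioc (0:ℝ) T)) := memLp_const 1
  have hconj : ((2 * (p:ℝ) + 2) / (2 * p + 1)).HolderConjugate (2 * (p:ℝ) + 2) := by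
    rw [Real.holderConjugate_iff]
    constructor
    · rw [lt_div_iff₀ (by positivity)]
      linarith
    · field_simp
      ring
  have holder := integral_mul_le_Lp_mul_Lq_of_nonneg (μ := volume.restrict (Ioc (0:ℝ) T))
    hconj (f := fun s => |y₁ s| ^ (2 * p + 1)) (g := fun _ => (1:ℝ))
    (Filter.Eventually.of_forall fun s => by positivity)
    (Filter.Eventually.of_forall fun _ => zero_le_one) hmemf hmemg
  -- simplify the Hölder inequality
  have hfpow : (∫ s in Ioc (0:ℝ) T, (|y₁ s| ^ (2 * p + 1)) ^ ((2 * (p:ℝ) + 2) / (2 * p + 1)))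
      = B := by
    rw [hB]
    apply setIntegral_congr_fun measurableSet_Ioc
    intro s _
    show ((|y₁ s| ^ (2 * p + 1) : ℝ)) ^ ((2 * (p:ℝ) + 2) / (2 * p + 1)) = |y₁ s| ^ (2 * p + 2)
    rw [← Real.rpow_natCast (|y₁ s|) (2 * p + 1), ← Real.rpow_mul (abs_nonneg _),
      ← Real.rpow_natCast (|y₁ s|) (2 * p + 2)]
    congr 1
    have h1 : ((2 * p + 1 : ℕ) : ℝ) = 2 * (p:ℝ) + 1 := by push_cast; ring
    have h2 : ((2 * p + 2 : ℕ) : ℝ) = 2 * (p:ℝ) + 2 := by push_cast; ring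
    rw [h1, h2]
    field_simp
  have hgpow : (∫ _ in Ioc (0:ℝ) T, (1:ℝ) ^ (2 * (p:ℝ) + 2)) = T := by
    simp [Real.volume_Ioc, ENNReal.toReal_ofReal h0T, h0T]
  have hAeq : (∫ s in Ioc (0:ℝ) T, |y₁ s| ^ (2 * p + 1) * 1) = A := by
    simp [hA]
  rw [hAeq, hfpow, hgpow] at holder
  have hBnonneg : 0 ≤ B := by
    apply setIntegral_nonneg measurableSet_Ioc
    intro s _; positivity
  -- raise Hölder to the power 2p+2
  have hApow : A ^ (2 * p + 2) ≤ B ^ (2 * p + 1) * T := by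
    have hq : (0:ℝ) < 2 * (p:ℝ) + 2 := by positivity
    have hq1 : (0:ℝ) < 2 * (p:ℝ) + 1 := by positivity
    have hRHSnn : 0 ≤ B ^ ((2 * (p:ℝ) + 1) / (2 * (p:ℝ) + 2)) * T ^ (1 / (2 * (p:ℝ) + 2)) := by
      apply mul_nonneg (Real.rpow_nonneg hBnonneg _) (Real.rpow_nonneg h0T _)
    have key : A ^ (2 * (p:ℝ) + 2) ≤ (B ^ ((2 * (p:ℝ) + 1) / (2 * (p:ℝ) + 2))
        * T ^ (1 / (2 * (p:ℝ) + 2))) ^ (2 * (p:ℝ) + 2) := by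
      apply Real.rpow_le_rpow hAnonneg ?_ hq.le
      calc A ≤ B ^ (1 / ((2 * (p:ℝ) + 2) / (2 * p + 1))) * T ^ (1 / (2 * (p:ℝ) + 2)) := holder
        _ = B ^ ((2 * (p:ℝ) + 1) / (2 * (p:ℝ) + 2)) * T ^ (1 / (2 * (p:ℝ) + 2)) := by
            rw [one_div_div]
    rw [Real.mul_rpow (Real.rpow_nonneg hBnonneg _) (Real.rpow_nonneg h0T _),
      ← Real.rpow_mul hBnonneg, ← Real.rpow_mul h0T] at key
    have e1 : (2 * (p:ℝ) + 1) / (2 * (p:ℝ) + 2) * (2 * (p:ℝ) + 2) = 2 * (p:ℝ) + 1 := by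
      field_simp
    have e2 : 1 / (2 * (p:ℝ) + 2) * (2 * (p:ℝ) + 2) = 1 := by field_simp
    rw [e1, e2, Real.rpow_one] at key
    have hcast1 : A ^ (2 * (p:ℝ) + 2) = A ^ (2 * p + 2) := by
      rw [← Real.rpow_natCast A (2 * p + 2)]
      congr 1; push_cast; ring
    have hcast2 : B ^ (2 * (p:ℝ) + 1) = B ^ (2 * p + 1) := by
      rw [← Real.rpow_natCast B (2 * p + 1)]
      congr 1; push_cast; ring
    rw [hcast1, hcast2] at key
    exact key
  -- identify y₄ T with B
  have hy₄eq : y₄ T = B := by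
    rw [hy₄ T ⟨h0T, le_rfl⟩, intervalIntegral.integral_of_le h0T, hB]
    apply setIntegral_congr_fun measurableSet_Ioc
    intro s _
    exact (Even.pow_abs ⟨p + 1, by ring⟩ (y₁ s)).symm
  have hy₄abs : |y₄ T| = B := by rw [hy₄eq, abs_of_nonneg hBnonneg]
  -- conclude
  calc |y₃ T| ^ (2 * p + 2)
      ≤ (A * T) ^ (2 * p + 2) := by
        apply pow_le_pow_left₀ (abs_nonneg _) hy₃bound
    _ = A ^ (2 * p + 2) * T ^ (2 * p + 2) := by rw [mul_pow]
    _ ≤ (B ^ (2 * p + 1) * T) * T ^ (2 * p + 2) := by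
        apply mul_le_mul_of_nonneg_right hApow (by positivity)
    _ = T ^ (2 * p + 3) * B ^ (2 * p + 1) := by ring
    _ = T ^ (2 * p + 3) * |y₄ T| ^ (2 * p + 1) := by rw [hy₄abs]
end
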